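/- arXiv:math/0702008 — 6 statements merged into one kernel-verified Lean document; each statement's English description precedes it below -/
import Mathlib

section
/- If h = 1_{(−∞,z]} for some z ∈ ℝ, then the solution y of the Stein equation satisfies ‖y'‖_∞ ≤ 1, where y'(x) := (1−ψ)x y(x) + h(x) − h̄_ψ is the derivative of y (defined for all x ≠ z). -/
/-! Write `G x = ∫_x^∞ e^{-a t²/2} dt` with `a = 1 - ψ`, and `T = √(2π/a) = G x + G (-x)`.
For the indicator of `(-∞, z]` the integral defining `y` is explicit: `h̄ = G(-z)/T`, and for
`x > z` one gets `y' x = h̄ (a x e^{a x²/2} G x - 1)`; for `x < z` the reflection `t ↦ -t`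
gives the same expression at `(-x, -z)` up to sign. Mills' bound `a x G x ≤ e^{-a x²/2}`
holds for every real `x`; at `x` it makes the bracket at most `0`, and at `-x`, together with
`h̄ ≤ G(-x)/T`, it gives `h̄ (1 - a x e^{a x²/2} G x) ≤ (G(-x) + G x)/T = 1`. -/

open MeasureTheory ProbabilityTheory Real Set

noncomputable section

/-- `h̄_ψ = E h(N)` for `N ~ N(0, (1-ψ)⁻¹)`. -/
def gaussMean (ψ : ℝ) (h : ℝ → ℝ) : ℝ :=
  ∫ x, h x ∂(gaussianReal 0 (Real.toNNReal (1 - ψ)⁻¹))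

/-- The bounded solution `y` of the Stein equation
`y'(x) - (1-ψ) x y(x) = h(x) - h̄_ψ`, given explicitly by
`y(x) = -e^{(1-ψ)x²/2} ∫_x^∞ e^{-(1-ψ)t²/2} (h(t) - h̄_ψ) dt`. -/
def steinSol (ψ : ℝ) (h : ℝ → ℝ) (x : ℝ) : ℝ :=
  - Real.exp ((1 - ψ) * x ^ 2 / 2) *
      ∫ t in Set.Ioi x, Real.exp (-((1 - ψ) * t ^ 2 / 2)) * (h t - gaussMean ψ h)

open Filter

section GaussTail

variable {a : ℝ}

theorem integrable_exp_neg_mul_sq_div_two (ha : 0 < a) :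
    Integrable fun t : ℝ => rexp (-(a * t ^ 2 / 2)) :=
  (integrable_exp_neg_mul_sq (half_pos ha)).congr <| ae_of_all _ fun t => by ring_nf

theorem integral_Ioi_mul_exp_neg_mul_sq_div_two (ha : 0 < a) (x : ℝ) :
    ∫ t in Ioi x, a * t * rexp (-(a * t ^ 2 / 2)) = rexp (-(a * x ^ 2 / 2)) := by
  have hderiv (t : ℝ) : HasDerivAt (fun t => -rexp (-(a * t ^ 2 / 2)))
      (a * t * rexp (-(a * t ^ 2 / 2))) t :=
    (((hasDerivAt_pow 2 t).const_mul a).div_const 2).neg.exp.neg.congr_deriv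
      (by simp only [Pi.neg_apply]; push_cast; ring)
  have hlim : Tendsto (fun t : ℝ => -rexp (-(a * t ^ 2 / 2))) atTop (nhds 0) := by
    have : Tendsto (fun t : ℝ => -(a * t ^ 2 / 2)) atTop atBot :=
      tendsto_neg_atBot_iff.mpr <|
        ((tendsto_pow_atTop two_ne_zero).const_mul_atTop ha).atTop_div_const two_pos
    simpa using (tendsto_exp_atBot.comp this).neg
  have hint : Integrable fun t : ℝ => a * t * rexp (-(a * t ^ 2 / 2)) :=
    ((integrable_mul_exp_neg_mul_sq (half_pos ha)).const_mul a).congr <|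
      ae_of_all _ fun t => by ring_nf
  rw [integral_Ioi_of_hasDerivAt_of_tendsto' (fun t _ => hderiv t) hint.integrableOn hlim]
  ring

def gaussTail (a x : ℝ) : ℝ :=
  ∫ t in Ioi x, rexp (-(a * t ^ 2 / 2))

theorem gaussTail_nonneg (a x : ℝ) : 0 ≤ gaussTail a x :=
  setIntegral_nonneg measurableSet_Ioi fun _ _ => (exp_pos _).le

theorem gaussTail_antitone (ha : 0 < a) : Antitone (gaussTail a) := fun _ _ hxy =>
  setIntegral_mono_set (integrable_exp_neg_mul_sq_div_two ha).integrableOn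
    (ae_of_all _ fun _ => (exp_pos _).le) (Ioi_subset_Ioi hxy).eventuallyLE

theorem gaussTail_neg (a x : ℝ) :
    gaussTail a (-x) = ∫ t in Iic x, rexp (-(a * t ^ 2 / 2)) := by
  rw [gaussTail, ← integral_comp_neg_Iic]
  simp only [neg_sq]

theorem gaussTail_add_gaussTail_neg (ha : 0 < a) (x : ℝ) :
    gaussTail a x + gaussTail a (-x) = √(2 * π / a) := by
  have htotal : ∫ t : ℝ, rexp (-(a * t ^ 2 / 2)) = √(2 * π / a) := by
    rw [show 2 * π / a = π / (a / 2) by field_simp, ← integral_gaussian]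
    congr 1 with t
    ring_nf
  rw [gaussTail_neg, add_comm, gaussTail, ← compl_Iic,
    integral_add_compl measurableSet_Iic (integrable_exp_neg_mul_sq_div_two ha), htotal]

theorem mul_gaussTail_le (ha : 0 < a) (x : ℝ) :
    a * x * gaussTail a x ≤ rexp (-(a * x ^ 2 / 2)) := by
  rw [gaussTail, ← integral_const_mul, ← integral_Ioi_mul_exp_neg_mul_sq_div_two ha x]
  refine setIntegral_mono_on ((integrable_exp_neg_mul_sq_div_two ha).const_mul _).integrableOn
    ?_ measurableSet_Ioi fun t ht => ?_
  · exact ((integrable_mul_exp_neg_mul_sq (half_pos ha)).const_mul a).integrableOn.congr_fun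
      (fun t _ => by ring_nf) measurableSet_Ioi
  · have : a * x ≤ a * t := mul_le_mul_of_nonneg_left (le_of_lt ht) ha.le
    nlinarith [exp_pos (-(a * t ^ 2 / 2))]

theorem mul_mul_exp_mul_gaussTail_le_one (ha : 0 < a) (x : ℝ) :
    a * x * rexp (a * x ^ 2 / 2) * gaussTail a x ≤ 1 := by
  calc a * x * rexp (a * x ^ 2 / 2) * gaussTail a x
      = rexp (a * x ^ 2 / 2) * (a * x * gaussTail a x) := by ring
    _ ≤ rexp (a * x ^ 2 / 2) * rexp (-(a * x ^ 2 / 2)) :=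
      mul_le_mul_of_nonneg_left (mul_gaussTail_le ha x) (exp_pos _).le
    _ = 1 := by rw [← exp_add, add_neg_cancel, exp_zero]

theorem abs_gaussTail_neg_div_mul_sub_one_le (ha : 0 < a) {x z : ℝ} (hzx : z < x) :
    |gaussTail a (-z) / √(2 * π / a) * (a * x * rexp (a * x ^ 2 / 2) * gaussTail a x - 1)| ≤ 1 := by
  set G := gaussTail a
  set e := rexp (a * x ^ 2 / 2)
  have hT : 0 < √(2 * π / a) := sqrt_pos.mpr (by positivity)
  have hw : a * x * e * G x ≤ 1 := mul_mul_exp_mul_gaussTail_le_one ha x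
  have hv : a * (-x) * e * G (-x) ≤ 1 := by
    simpa only [e, neg_sq] using mul_mul_exp_mul_gaussTail_le_one ha (-x)
  have hp : G (-z) ≤ G (-x) := gaussTail_antitone ha (neg_lt_neg hzx).le
  have hbound : G (-z) * (1 - a * x * e * G x) ≤ G x + G (-x) := by
    calc G (-z) * (1 - a * x * e * G x)
        ≤ G (-x) * (1 - a * x * e * G x) := mul_le_mul_of_nonneg_right hp (by linarith)
      _ = G (-x) + G x * (a * (-x) * e * G (-x)) := by ring
      _ ≤ G (-x) + G x * 1 := by gcongr; exact gaussTail_nonneg a x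
      _ = G x + G (-x) := by ring
  rw [gaussTail_add_gaussTail_neg ha] at hbound
  rw [abs_le, div_mul_eq_mul_div, le_div_iff₀ hT, div_le_iff₀ hT]
  constructor
  · linarith
  · nlinarith [gaussTail_nonneg a (-z)]

theorem setIntegral_Ioi_exp_mul_indicator_Iic_sub (ha : 0 < a) (x z c : ℝ) :
    ∫ t in Ioi x, rexp (-(a * t ^ 2 / 2)) * ((Iic z).indicator (fun _ => 1) t - c) =
      (∫ t in Ioc x z, rexp (-(a * t ^ 2 / 2))) - c * gaussTail a x := by
  have hφ := (integrable_exp_neg_mul_sq_div_two ha).integrableOn (s := Ioi x)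
  have hsplit (t : ℝ) : rexp (-(a * t ^ 2 / 2)) * ((Iic z).indicator (fun _ => 1) t - c) =
      (Iic z).indicator (fun t => rexp (-(a * t ^ 2 / 2))) t - c * rexp (-(a * t ^ 2 / 2)) := by
    by_cases ht : t ∈ Iic z <;> simp [ht] <;> ring
  simp_rw [hsplit]
  rw [integral_sub (hφ.indicator measurableSet_Iic) (hφ.const_mul c),
    setIntegral_indicator measurableSet_Iic, Ioi_inter_Iic, integral_const_mul, gaussTail]

end GaussTail

theorem gaussMean_indicator_one {ψ : ℝ} (hψ : ψ < 1) {s : Set ℝ} (hs : MeasurableSet s) :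
    gaussMean ψ (s.indicator fun _ => 1) =
      (√(2 * π / (1 - ψ)))⁻¹ * ∫ t in s, rexp (-((1 - ψ) * t ^ 2 / 2)) := by
  have ha : 0 < 1 - ψ := sub_pos.mpr hψ
  have hv : ((1 - ψ)⁻¹.toNNReal : ℝ) = (1 - ψ)⁻¹ := coe_toNNReal _ (inv_pos.mpr ha).le
  have hpdf (t : ℝ) : gaussianPDFReal 0 (1 - ψ)⁻¹.toNNReal t
      = (√(2 * π / (1 - ψ)))⁻¹ * rexp (-((1 - ψ) * t ^ 2 / 2)) := by
    rw [gaussianPDFReal, hv, ← div_eq_mul_inv (2 * π)]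
    congr 2
    field_simp
    ring
  rw [gaussMean, integral_indicator_const _ hs, smul_eq_mul, mul_one, measureReal_def,
    gaussianReal_apply_eq_integral 0 (by simpa using ha) s,
    ENNReal.toReal_ofReal (setIntegral_nonneg hs fun t _ => gaussianPDFReal_nonneg _ _ _),
    setIntegral_congr_fun hs fun t _ => hpdf t, integral_const_mul]

theorem gaussMean_indicator_Iic {ψ : ℝ} (hψ : ψ < 1) (z : ℝ) :
    gaussMean ψ ((Iic z).indicator fun _ => 1) = gaussTail (1 - ψ) (-z) / √(2 * π / (1 - ψ)) := by
  rw [gaussMean_indicator_one hψ measurableSet_Iic, gaussTail_neg, inv_mul_eq_div]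

theorem steinSol_indicator_Iic_of_lt (ψ : ℝ) {x z : ℝ} (hzx : z < x) :
    steinSol ψ ((Iic z).indicator fun _ => 1) x =
      rexp ((1 - ψ) * x ^ 2 / 2) * gaussMean ψ ((Iic z).indicator fun _ => 1) *
        gaussTail (1 - ψ) x := by
  set c := gaussMean ψ ((Iic z).indicator fun _ => 1)
  have hint : ∫ t in Ioi x, rexp (-((1 - ψ) * t ^ 2 / 2)) * ((Iic z).indicator (fun _ => 1) t - c)
      = ∫ t in Ioi x, rexp (-((1 - ψ) * t ^ 2 / 2)) * (0 - c) := by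
    refine setIntegral_congr_fun measurableSet_Ioi fun t ht => ?_
    rw [indicator_of_notMem (notMem_Iic.mpr (hzx.trans ht))]
  rw [steinSol, hint, integral_mul_const, gaussTail]
  ring

theorem steinSol_indicator_Iic_of_gt {ψ : ℝ} (hψ : ψ < 1) {x z : ℝ} (hxz : x < z) :
    steinSol ψ ((Iic z).indicator fun _ => 1) x =
      rexp ((1 - ψ) * x ^ 2 / 2) * (gaussTail (1 - ψ) z / √(2 * π / (1 - ψ))) *
        gaussTail (1 - ψ) (-x) := by
  have ha : 0 < 1 - ψ := sub_pos.mpr hψ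
  rw [steinSol, setIntegral_Ioi_exp_mul_indicator_Iic_sub ha, gaussMean_indicator_Iic hψ]
  set G := gaussTail (1 - ψ)
  set T := √(2 * π / (1 - ψ))
  have hT : 0 < T := sqrt_pos.mpr (by positivity)
  have hIoc : ∫ t in Ioc x z, rexp (-((1 - ψ) * t ^ 2 / 2)) = G x - G z := by
    rw [← intervalIntegral.integral_of_le hxz.le, ← intervalIntegral.integral_Ioi_sub_Ioi
      (integrable_exp_neg_mul_sq_div_two ha).integrableOn hxz.le]
    rfl
  have hx : G x + G (-x) = T := gaussTail_add_gaussTail_neg ha x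
  have hz : G z + G (-z) = T := gaussTail_add_gaussTail_neg ha z
  rw [hIoc]
  field_simp
  linear_combination G x * hz - G z * hx

theorem stmt7_general (ψ : ℝ) (hψ1 : ψ < 1) (z : ℝ) :
    ∀ x : ℝ, x ≠ z →
      |(1 - ψ) * x * steinSol ψ (Set.indicator (Set.Iic z) fun _ => (1 : ℝ)) x
          + (Set.indicator (Set.Iic z) fun _ => (1 : ℝ)) x
          - gaussMean ψ (Set.indicator (Set.Iic z) fun _ => (1 : ℝ))|
        ≤ 1 := by
  intro x hxz
  have ha : 0 < 1 - ψ := sub_pos.mpr hψ1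
  rcases hxz.lt_or_gt with hxz | hzx
  · have hT : 0 < √(2 * π / (1 - ψ)) := sqrt_pos.mpr (by positivity)
    have hz := gaussTail_add_gaussTail_neg ha z
    rw [steinSol_indicator_Iic_of_gt hψ1 hxz, indicator_of_mem (mem_Iic.mpr hxz.le),
      gaussMean_indicator_Iic hψ1, ← abs_neg]
    convert abs_gaussTail_neg_div_mul_sub_one_le ha (neg_lt_neg hxz) using 2
    rw [neg_neg, neg_sq]
    field_simp
    linear_combination hz
  · rw [steinSol_indicator_Iic_of_lt ψ hzx, indicator_of_notMem (notMem_Iic.mpr hzx),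
      gaussMean_indicator_Iic hψ1]
    convert abs_gaussTail_neg_div_mul_sub_one_le ha hzx using 2
    ring

theorem stmt7 (ψ : ℝ) (hψ0 : 0 ≤ ψ) (hψ1 : ψ < 1) (z : ℝ) :
    ∀ x : ℝ, x ≠ z →
      |(1 - ψ) * x * steinSol ψ (Set.indicator (Set.Iic z) fun _ => (1 : ℝ)) x
          + (Set.indicator (Set.Iic z) fun _ => (1 : ℝ)) x
          - gaussMean ψ (Set.indicator (Set.Iic z) fun _ => (1 : ℝ))|
        ≤ 1 :=
  stmt7_general ψ hψ1 z
end
end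

section
/- If h : ℝ → ℝ is differentiable with bounded derivative, then the solution y of the Stein equation satisfies ‖y‖_∞ ≤ 2(1−ψ)⁻¹·‖h'‖_∞. -/
open MeasureTheory ProbabilityTheory Real Set

noncomputable section

/-!
Put `b = (1 - ψ) / 2` and `g = h - h̄_ψ`, so that `|y(x)| = e^{bx²} |∫_x^∞ e^{-bt²} g(t) dt|`.
As `h` is `C`-Lipschitz, `|g(t)| ≤ C|t| + C E|N|`, and `∫_ℝ e^{-bt²} g = 0` because `h̄_ψ` is the
mean of `h` under the density `e^{-bt²} / √(π/b)` of `N`. For `x ≥ 0` the tail integrals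
`∫_x^∞ t e^{-bt²} dt = e^{-bx²} / (2b)` and `∫_x^∞ e^{-bt²} dt ≤ e^{-bx²} √(π/b) / 2`, together with
`E|N| = 1 / (b √(π/b))`, give `|y(x)| ≤ C / (2b) + C / (2b) = 2C / (1 - ψ)`. For `x < 0` the
vanishing total integral trades the tail over `(x, ∞)` for the one over `(-∞, x)`, which is the
case `-x > 0` after `t ↦ -t`.
-/

open scoped NNReal

section GaussianTail

variable {b : ℝ}

lemma integrable_abs_mul_exp_neg_mul_sq (hb : 0 < b) :
    Integrable fun t : ℝ => |t| * exp (-b * t ^ 2) := by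
  simpa [abs_mul] using (integrable_mul_exp_neg_mul_sq hb).abs

lemma integral_Ioi_mul_exp_neg_mul_sq (hb : 0 < b) (x : ℝ) :
    ∫ t in Ioi x, t * exp (-b * t ^ 2) = exp (-b * x ^ 2) / (2 * b) := by
  have hderiv : ∀ t ∈ Ici x,
      HasDerivAt (fun u : ℝ => -exp (-b * u ^ 2) / (2 * b)) (t * exp (-b * t ^ 2)) t := by
    intro t _
    have := (((hasDerivAt_pow 2 t).const_mul (-b)).exp).neg.div_const (2 * b)
    refine this.congr_deriv ?_
    field_simp
    ring
  have hlim : Filter.Tendsto (fun u : ℝ => -exp (-b * u ^ 2) / (2 * b)) Filter.atTop (nhds 0) := by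
    have hsq : Filter.Tendsto (fun u : ℝ => -b * u ^ 2) Filter.atTop Filter.atBot :=
      (Filter.tendsto_pow_atTop two_ne_zero).const_mul_atTop_of_neg (neg_neg_of_pos hb)
    simpa using (tendsto_exp_atBot.comp hsq).neg.div_const (2 * b)
  rw [integral_Ioi_of_hasDerivAt_of_tendsto' hderiv
    (integrable_mul_exp_neg_mul_sq hb).integrableOn hlim]
  ring

lemma integral_abs_mul_exp_neg_mul_sq (hb : 0 < b) :
    ∫ t, |t| * exp (-b * t ^ 2) = b⁻¹ := by
  have := integral_comp_abs (f := fun u : ℝ => u * exp (-b * u ^ 2))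
  simp only [sq_abs] at this
  rw [this, integral_Ioi_mul_exp_neg_mul_sq hb]
  field_simp
  simp

lemma integral_Ioi_exp_neg_mul_sq_le (hb : 0 < b) {x : ℝ} (hx : 0 ≤ x) :
    ∫ t in Ioi x, exp (-b * t ^ 2) ≤ exp (-b * x ^ 2) * (√(π / b) / 2) := by
  have hshift : ∫ t in Ioi x, exp (-b * t ^ 2) = ∫ t in Ioi 0, exp (-b * (t + x) ^ 2) := by
    have := (measurePreserving_add_right volume x).setIntegral_preimage_emb
      (measurableEmbedding_addRight x) (fun t => exp (-b * t ^ 2)) (Ioi x)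
    rw [← this]
    congr 1
    ext t
    simp
  rw [hshift, ← integral_gaussian_Ioi, ← integral_const_mul]
  refine setIntegral_mono_on ((integrable_exp_neg_mul_sq hb).comp_add_right x).integrableOn
    ((integrable_exp_neg_mul_sq hb).const_mul _).integrableOn measurableSet_Ioi fun t ht => ?_
  rw [← exp_add, exp_le_exp]
  nlinarith [mul_nonneg (mul_nonneg hb.le (le_of_lt (mem_Ioi.mp ht))) hx]

variable {g : ℝ → ℝ} {C D : ℝ}

lemma integrable_exp_neg_mul_sq_mul (hb : 0 < b) (hgm : AEStronglyMeasurable g)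
    (hg : ∀ t, |g t| ≤ C * |t| + D) : Integrable fun t => exp (-b * t ^ 2) * g t := by
  refine (((integrable_abs_mul_exp_neg_mul_sq hb).const_mul C).add
    ((integrable_exp_neg_mul_sq hb).const_mul D)).mono'
    ((continuous_exp.comp (continuous_const.mul (continuous_pow 2))).aestronglyMeasurable.mul hgm)
    (ae_of_all _ fun t => ?_)
  rw [norm_mul, norm_of_nonneg (exp_pos _).le, norm_eq_abs]
  calc exp (-b * t ^ 2) * |g t| ≤ exp (-b * t ^ 2) * (C * |t| + D) := by gcongr; exact hg t
    _ = _ := by simp only [Pi.add_apply]; ring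

lemma abs_integral_Ioi_exp_neg_mul_sq_mul_le (hb : 0 < b) (hgm : AEStronglyMeasurable g)
    (hg : ∀ t, |g t| ≤ C * |t| + D) (hD : 0 ≤ D) {x : ℝ} (hx : 0 ≤ x) :
    |∫ t in Ioi x, exp (-b * t ^ 2) * g t| ≤
      exp (-b * x ^ 2) * (C / (2 * b) + D * (√(π / b) / 2)) := by
  have habs_eq : ∫ t in Ioi x, |t| * exp (-b * t ^ 2) = ∫ t in Ioi x, t * exp (-b * t ^ 2) :=
    setIntegral_congr_fun measurableSet_Ioi fun t ht => by
      rw [abs_of_pos (hx.trans_lt ht)]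
  calc |∫ t in Ioi x, exp (-b * t ^ 2) * g t|
      ≤ ∫ t in Ioi x, |exp (-b * t ^ 2) * g t| := abs_integral_le_integral_abs
    _ ≤ ∫ t in Ioi x, (C * (|t| * exp (-b * t ^ 2)) + D * exp (-b * t ^ 2)) := by
      refine setIntegral_mono_on (integrable_exp_neg_mul_sq_mul hb hgm hg).abs.integrableOn
        (((integrable_abs_mul_exp_neg_mul_sq hb).const_mul C).add
          ((integrable_exp_neg_mul_sq hb).const_mul D)).integrableOn measurableSet_Ioi
        fun t _ => ?_
      rw [abs_mul, abs_of_pos (exp_pos _)]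
      nlinarith [hg t, exp_pos (-b * t ^ 2)]
    _ = C * (exp (-b * x ^ 2) / (2 * b)) + D * ∫ t in Ioi x, exp (-b * t ^ 2) := by
      rw [integral_add ((integrable_abs_mul_exp_neg_mul_sq hb).const_mul C).integrableOn
        ((integrable_exp_neg_mul_sq hb).const_mul D).integrableOn, integral_const_mul,
        integral_const_mul, habs_eq, integral_Ioi_mul_exp_neg_mul_sq hb]
    _ ≤ C * (exp (-b * x ^ 2) / (2 * b)) + D * (exp (-b * x ^ 2) * (√(π / b) / 2)) := by
      gcongr
      exact integral_Ioi_exp_neg_mul_sq_le hb hx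
    _ = _ := by ring

lemma abs_integral_Ioi_exp_neg_mul_sq_mul_le_of_integral_eq_zero (hb : 0 < b)
    (hgm : AEStronglyMeasurable g) (hg : ∀ t, |g t| ≤ C * |t| + D) (hD : 0 ≤ D)
    (hg₀ : ∫ t, exp (-b * t ^ 2) * g t = 0) (x : ℝ) :
    |∫ t in Ioi x, exp (-b * t ^ 2) * g t| ≤
      exp (-b * x ^ 2) * (C / (2 * b) + D * (√(π / b) / 2)) := by
  rcases le_or_gt 0 x with hx | hx
  · exact abs_integral_Ioi_exp_neg_mul_sq_mul_le hb hgm hg hD hx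
  have hint := integrable_exp_neg_mul_sq_mul hb hgm hg
  have hsplit : ∫ t in Ioi x, exp (-b * t ^ 2) * g t = -∫ t in Iic x, exp (-b * t ^ 2) * g t := by
    have := intervalIntegral.integral_Iic_add_Ioi (b := x) hint.integrableOn hint.integrableOn
    linarith
  have hrefl :
      ∫ t in Iic x, exp (-b * t ^ 2) * g t = ∫ t in Ioi (-x), exp (-b * t ^ 2) * g (-t) := by
    rw [← neg_neg x, ← integral_comp_neg_Ioi, neg_neg]
    simp only [neg_sq]
  rw [hsplit, abs_neg, hrefl, ← neg_sq x]
  exact abs_integral_Ioi_exp_neg_mul_sq_mul_le hb (hgm.comp_quasiMeasurePreserving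
    (Measure.measurePreserving_neg volume).quasiMeasurePreserving)
    (fun t => by simpa using hg (-t)) hD (by linarith)

end GaussianTail

section Lipschitz

variable {μ : Measure ℝ} {K : ℝ≥0} {f : ℝ → ℝ}

lemma LipschitzWith.integrable_of_integrable_id [IsFiniteMeasure μ] (hf : LipschitzWith K f)
    (hμ : Integrable (fun x => x) μ) : Integrable f μ := by
  refine ((integrable_const |f 0|).add (hμ.abs.const_mul K)).mono'
    hf.continuous.aestronglyMeasurable (ae_of_all _ fun x => ?_)
  have := hf.dist_le_mul x 0
  rw [dist_eq, dist_eq, sub_zero] at this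
  rw [norm_eq_abs, Pi.add_apply]
  linarith [abs_sub_abs_le_abs_sub (f x) (f 0)]

lemma LipschitzWith.abs_sub_integral_le [IsProbabilityMeasure μ] (hf : LipschitzWith K f)
    (hμ : Integrable (fun x => x) μ) (t : ℝ) :
    |f t - ∫ s, f s ∂μ| ≤ K * |t| + K * ∫ s, |s| ∂μ := by
  have hfi := hf.integrable_of_integrable_id hμ
  calc |f t - ∫ s, f s ∂μ| = |∫ s, (f t - f s) ∂μ| := by
        rw [integral_sub (integrable_const _) hfi, integral_const, probReal_univ, one_smul]
    _ ≤ ∫ s, |f t - f s| ∂μ := abs_integral_le_integral_abs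
    _ ≤ ∫ s, (K * |t| + K * |s|) ∂μ := by
        refine integral_mono ((integrable_const _).sub hfi).abs
          ((integrable_const _).add (hμ.abs.const_mul _)) fun s => ?_
        have := hf.dist_le_mul t s
        rw [dist_eq, dist_eq] at this
        nlinarith [abs_sub t s, K.coe_nonneg]
    _ = K * |t| + K * ∫ s, |s| ∂μ := by
        rw [integral_add (integrable_const _) (hμ.abs.const_mul _), integral_const, probReal_univ,
          one_smul, integral_const_mul]

end Lipschitz

section Gaussian

variable {μ : ℝ} {v : ℝ≥0} {f : ℝ → ℝ} {b : ℝ}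

lemma integrable_gaussianReal_iff (hv : v ≠ 0) :
    Integrable f (gaussianReal μ v) ↔ Integrable fun x => gaussianPDFReal μ v x * f x := by
  rw [gaussianReal_of_var_ne_zero _ hv, integrable_withDensity_iff_integrable_smul'
    (measurable_gaussianPDF _ _) (ae_of_all _ fun _ => gaussianPDF_lt_top)]
  simp only [toReal_gaussianPDF, smul_eq_mul]

lemma integral_gaussianPDFReal_mul_sub_integral (hv : v ≠ 0)
    (hf : Integrable f (gaussianReal μ v)) :
    ∫ x, gaussianPDFReal μ v x * (f x - ∫ y, f y ∂gaussianReal μ v) = 0 := by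
  simp only [mul_sub]
  rw [integral_sub ((integrable_gaussianReal_iff hv).mp hf)
      ((integrable_gaussianPDFReal μ v).mul_const _), integral_mul_const,
    integral_gaussianPDFReal_eq_one μ hv, one_mul, integral_gaussianReal_eq_integral_smul hv]
  simp only [smul_eq_mul, sub_self]

lemma gaussianPDFReal_zero_toNNReal_inv_two_mul (hb : 0 < b) (t : ℝ) :
    gaussianPDFReal 0 (2 * b)⁻¹.toNNReal t = (√(π / b))⁻¹ * exp (-b * t ^ 2) := by
  rw [gaussianPDFReal, coe_toNNReal _ (by positivity)]
  congr 2
  · field_simp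
  · rw [sub_zero]
    field_simp

lemma integral_abs_gaussianReal_toNNReal_inv_two_mul (hb : 0 < b) :
    ∫ x, |x| ∂gaussianReal 0 (2 * b)⁻¹.toNNReal = (√(π / b))⁻¹ / b := by
  rw [integral_gaussianReal_eq_integral_smul (by positivity)]
  simp only [gaussianPDFReal_zero_toNNReal_inv_two_mul hb, smul_eq_mul, mul_assoc,
    mul_comm (exp _)]
  rw [integral_const_mul, integral_abs_mul_exp_neg_mul_sq hb, ← div_eq_mul_inv]

end Gaussian

lemma abs_steinSol (ψ : ℝ) (h : ℝ → ℝ) (x : ℝ) :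
    |steinSol ψ h x| = exp ((1 - ψ) / 2 * x ^ 2) *
      |∫ t in Ioi x, exp (-((1 - ψ) / 2) * t ^ 2) * (h t - gaussMean ψ h)| := by
  rw [steinSol, abs_mul, abs_neg, abs_of_pos (exp_pos _)]
  congr 3
  · ring
  · funext t
    ring_nf

theorem stmt12_general (ψ : ℝ) (hψ1 : ψ < 1) (h : ℝ → ℝ) (hdiff : Differentiable ℝ h) (C : ℝ) (hC : ∀ x, |deriv h x| ≤ C) :
    ∀ x : ℝ, |steinSol ψ h x| ≤ 2 / (1 - ψ) * C := by
  intro x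
  set b := (1 - ψ) / 2 with hb_def
  have hb : 0 < b := half_pos (sub_pos.mpr hψ1)
  have h2b : 1 - ψ = 2 * b := by rw [hb_def]; ring
  have hC0 : 0 ≤ C := (abs_nonneg _).trans (hC 0)
  have hlip : LipschitzWith C.toNNReal h := lipschitzWith_of_nnnorm_deriv_le hdiff fun t => by
    rw [← NNReal.coe_le_coe, coe_nnnorm, coe_toNNReal _ hC0]
    exact hC t
  set ν := gaussianReal 0 (2 * b)⁻¹.toNNReal
  have hmean : gaussMean ψ h = ∫ s, h s ∂ν := by
    rw [gaussMean, h2b]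
  have hid : Integrable (fun s => s) ν := memLp_one_iff_integrable.mp (memLp_id_gaussianReal 1)
  have hzero : ∫ t, exp (-b * t ^ 2) * (h t - ∫ s, h s ∂ν) = 0 := by
    have := integral_gaussianPDFReal_mul_sub_integral (by positivity)
      (hlip.integrable_of_integrable_id hid)
    simp only [gaussianPDFReal_zero_toNNReal_inv_two_mul hb, mul_assoc] at this
    rwa [integral_const_mul, mul_eq_zero, or_iff_right (by positivity)] at this
  have htail := abs_integral_Ioi_exp_neg_mul_sq_mul_le_of_integral_eq_zero
    (g := fun t => h t - ∫ s, h s ∂ν) hb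
    (hdiff.continuous.sub continuous_const).aestronglyMeasurable
    (hlip.abs_sub_integral_le hid) (by positivity) hzero x
  rw [integral_abs_gaussianReal_toNNReal_inv_two_mul hb, coe_toNNReal _ hC0] at htail
  rw [abs_steinSol, hmean, ← hb_def]
  calc _ ≤ exp (b * x ^ 2) *
        (exp (-b * x ^ 2) * (C / (2 * b) + C * ((√(π / b))⁻¹ / b) * (√(π / b) / 2))) := by gcongr
    _ = 2 / (1 - ψ) * C := by
      have : 0 < √(π / b) := by positivity
      rw [← mul_assoc, ← exp_add, neg_mul, add_neg_cancel, exp_zero, one_mul, h2b]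
      field_simp
      ring

theorem stmt12 (ψ : ℝ) (hψ0 : 0 ≤ ψ) (hψ1 : ψ < 1) (h : ℝ → ℝ) (hdiff : Differentiable ℝ h) (C : ℝ) (hC : ∀ x, |deriv h x| ≤ C) :
    ∀ x : ℝ, |steinSol ψ h x| ≤ 2 / (1 - ψ) * C :=
  stmt12_general ψ hψ1 h hdiff C hC

end
end

section
/- If h : ℝ → ℝ is differentiable with bounded derivative, then the solution y of the Stein equation satisfies ‖y'‖_∞ ≤ 4(1−ψ)^{−1/2}·‖h'‖_∞. -/
open MeasureTheory ProbabilityTheory Real Set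

noncomputable section

/-! Write `f = h - h̄_ψ` and `a = 1 - ψ`, so that `y' = a x y + f`. For `x ≥ 0` split
`y(x) = -e^{a x²/2} (∫_x^∞ w(t) (f t - f x) dt + f(x) ∫_x^∞ w)` with `w(t) = e^{-a t²/2}`.
The first part contributes at most `‖h'‖ x (1 - P)` and the second at most `|f x| (1 - P)`,
where `P = a x e^{a x²/2} ∫_x^∞ w`; the Mills-ratio bounds `a x²/(a x² + 1) ≤ P ≤ 1`, together with
`|f x| ≤ ‖h'‖ (x + a^{-1/2})` (as `f` has Gaussian mean zero), give `|y'(x)| ≤ 2 a^{-1/2} ‖h'‖`.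
Negative `x` reduce to positive ones by the symmetry `t ↦ -t` of the Gaussian. -/

open scoped NNReal

lemma LipschitzWith.abs_sub_le_mul {K : ℝ≥0} {f : ℝ → ℝ} (hf : LipschitzWith K f) (s t : ℝ) :
    |f s - f t| ≤ K * |s - t| := by
  simpa only [Real.dist_eq] using hf.dist_le_mul s t

lemma LipschitzWith.sub_const {K : ℝ≥0} {f : ℝ → ℝ} (hf : LipschitzWith K f) (c : ℝ) :
    LipschitzWith K fun t => f t - c := by
  simpa using hf.sub (LipschitzWith.const c)

lemma LipschitzWith.comp_neg {K : ℝ≥0} {f : ℝ → ℝ} (hf : LipschitzWith K f) :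
    LipschitzWith K fun t => f (-t) :=
  LipschitzWith.of_dist_le_mul fun s t => by
    simpa only [dist_neg_neg] using hf.dist_le_mul (-s) (-t)

lemma integral_Ioi_eq_neg_of_hasDerivAt {E : Type*} [NormedAddCommGroup E] [NormedSpace ℝ E]
    [CompleteSpace E] {F F' : ℝ → E} {x : ℝ} (hderiv : ∀ t ∈ Ici x, HasDerivAt F (F' t) t)
    (hF : IntegrableOn F (Ioi x)) (hF' : IntegrableOn F' (Ioi x)) :
    ∫ t in Ioi x, F' t = -F x := by
  have hlim := tendsto_zero_of_hasDerivAt_of_integrableOn_Ioi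
    (fun t ht => hderiv t (Ioi_subset_Ici_self ht)) hF' hF
  rw [integral_Ioi_of_hasDerivAt_of_tendsto' hderiv hF' hlim, zero_sub]

lemma hasDerivAt_integral_Ioi {g : ℝ → ℝ} (hg : Continuous g) (hint : Integrable g) (x : ℝ) :
    HasDerivAt (fun u => ∫ t in Ioi u, g t) (-g x) x := by
  have hsplit : ∀ u, ∫ t in Ioi u, g t = (∫ t in Ioi 0, g t) - ∫ t in (0 : ℝ)..u, g t := fun u =>
    eq_sub_of_add_eq' (intervalIntegral.integral_interval_add_Ioi hint.integrableOn
      hint.integrableOn)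
  exact ((hg.integral_hasStrictDerivAt 0 x).hasDerivAt.const_sub _).congr_of_eventuallyEq
    (Filter.Eventually.of_forall hsplit)

namespace SteinBound

def gaussWeight (a t : ℝ) : ℝ := exp (-(a * t ^ 2 / 2))

def steinTransform (a : ℝ) (f : ℝ → ℝ) (x : ℝ) : ℝ :=
  -exp (a * x ^ 2 / 2) * ∫ t in Ioi x, gaussWeight a t * f t

lemma steinSol_eq_steinTransform (ψ : ℝ) (h : ℝ → ℝ) :
    steinSol ψ h = steinTransform (1 - ψ) (fun t => h t - gaussMean ψ h) := rfl

lemma gaussWeight_pos (a t : ℝ) : 0 < gaussWeight a t := exp_pos _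

lemma gaussWeight_neg (a t : ℝ) : gaussWeight a (-t) = gaussWeight a t := by
  rw [gaussWeight, gaussWeight, neg_sq]

lemma exp_mul_gaussWeight (a x : ℝ) : exp (a * x ^ 2 / 2) * gaussWeight a x = 1 := by
  rw [gaussWeight, ← exp_add, add_neg_cancel, exp_zero]

lemma continuous_gaussWeight (a : ℝ) : Continuous (gaussWeight a) := by
  unfold gaussWeight
  fun_prop

lemma hasDerivAt_gaussWeight (a t : ℝ) :
    HasDerivAt (gaussWeight a) (-(a * t) * gaussWeight a t) t := by
  have h : HasDerivAt (fun t : ℝ => -(a * t ^ 2 / 2)) (-(a * t)) t :=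
    (((hasDerivAt_pow 2 t).const_mul a).div_const 2).fun_neg.congr_deriv (by push_cast; ring)
  exact h.exp.congr_deriv (mul_comm _ _)

lemma gaussWeight_eq_exp_neg_mul_sq (a : ℝ) : gaussWeight a = fun t => exp (-(a / 2) * t ^ 2) := by
  ext t
  rw [gaussWeight]
  ring_nf

variable {a : ℝ} {K : ℝ≥0} {f : ℝ → ℝ}

lemma integrable_gaussWeight (ha : 0 < a) : Integrable (gaussWeight a) := by
  rw [gaussWeight_eq_exp_neg_mul_sq]
  exact integrable_exp_neg_mul_sq (half_pos ha)

lemma integrable_mul_gaussWeight (ha : 0 < a) : Integrable fun t => t * gaussWeight a t := by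
  rw [gaussWeight_eq_exp_neg_mul_sq]
  exact integrable_mul_exp_neg_mul_sq (half_pos ha)

lemma integrable_abs_mul_gaussWeight (ha : 0 < a) : Integrable fun t => |t| * gaussWeight a t := by
  simpa only [abs_mul, abs_of_pos (gaussWeight_pos a _)] using (integrable_mul_gaussWeight ha).abs

lemma integral_gaussWeight (a : ℝ) : ∫ t, gaussWeight a t = √(2 * π) / √a := by
  rw [gaussWeight_eq_exp_neg_mul_sq, integral_gaussian, div_div_eq_mul_div, mul_comm,
    sqrt_div (by positivity)]

lemma integral_Ioi_mul_gaussWeight (ha : 0 < a) (x : ℝ) :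
    ∫ t in Ioi x, t * gaussWeight a t = gaussWeight a x / a := by
  have hderiv : ∀ t ∈ Ici x, HasDerivAt (fun t => -(gaussWeight a t / a)) (t * gaussWeight a t) t :=
    fun t _ => ((hasDerivAt_gaussWeight a t).div_const a).neg.congr_deriv (by field_simp)
  rw [integral_Ioi_eq_neg_of_hasDerivAt hderiv
    ((integrable_gaussWeight ha).div_const a).neg.integrableOn
    (integrable_mul_gaussWeight ha).integrableOn, neg_neg]

lemma integral_abs_mul_gaussWeight (ha : 0 < a) : ∫ t, |t| * gaussWeight a t = 2 / a := by
  have hw : (fun t => |t| * gaussWeight a t) = fun t => |t| * gaussWeight a |t| := by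
    simp only [gaussWeight, sq_abs]
  rw [hw, integral_comp_abs (f := fun t => t * gaussWeight a t),
    integral_Ioi_mul_gaussWeight ha 0, gaussWeight]
  simp [div_eq_mul_inv]

lemma mul_integral_Ioi_gaussWeight_le (ha : 0 < a) (x : ℝ) :
    a * x * ∫ t in Ioi x, gaussWeight a t ≤ gaussWeight a x := by
  calc a * x * ∫ t in Ioi x, gaussWeight a t = ∫ t in Ioi x, a * x * gaussWeight a t :=
        (integral_const_mul _ _).symm
    _ ≤ ∫ t in Ioi x, a * (t * gaussWeight a t) := by
        refine setIntegral_mono_on ((integrable_gaussWeight ha).const_mul _).integrableOn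
          ((integrable_mul_gaussWeight ha).const_mul _).integrableOn measurableSet_Ioi
          fun t ht => ?_
        rw [← mul_assoc]
        exact mul_le_mul_of_nonneg_right (mul_le_mul_of_nonneg_left (le_of_lt ht) ha.le)
          (gaussWeight_pos a t).le
    _ = gaussWeight a x := by
        rw [integral_const_mul, integral_Ioi_mul_gaussWeight ha, mul_div_cancel₀ _ ha.ne']

lemma mul_gaussWeight_div_le_integral_Ioi (ha : 0 < a) (x : ℝ) :
    x * gaussWeight a x / (a * x ^ 2 + 1) ≤ ∫ t in Ioi x, gaussWeight a t := by
  have hq : ∀ t : ℝ, 1 ≤ a * t ^ 2 + 1 := fun t => le_add_of_nonneg_left (by positivity)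
  set G' : ℝ → ℝ := fun t => gaussWeight a t * (2 / (a * t ^ 2 + 1) ^ 2 - 1)
  have hG'le : ∀ t, |G' t| ≤ gaussWeight a t := fun t => by
    have h2 : 2 / (a * t ^ 2 + 1) ^ 2 ≤ 2 :=
      div_le_self zero_le_two (one_le_pow₀ (hq t))
    have h0 : 0 ≤ 2 / (a * t ^ 2 + 1) ^ 2 := by positivity
    rw [abs_mul, abs_of_pos (gaussWeight_pos a t)]
    exact mul_le_of_le_one_right (gaussWeight_pos a t).le (abs_le.2 ⟨by linarith, by linarith⟩)
  have hderiv : ∀ t, HasDerivAt (fun t => t * gaussWeight a t / (a * t ^ 2 + 1)) (G' t) t := by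
    intro t
    have hden : HasDerivAt (fun t : ℝ => a * t ^ 2 + 1) (a * (2 * t)) t :=
      (((hasDerivAt_pow 2 t).const_mul a).add_const 1).congr_deriv (by push_cast; ring)
    refine (((hasDerivAt_id t).mul (hasDerivAt_gaussWeight a t)).div hden
      (by linarith [hq t])).congr_deriv ?_
    have hq0 : a * t ^ 2 + 1 ≠ 0 := by linarith [hq t]
    simp only [G', Pi.mul_apply, id]
    field_simp
    ring
  have hG : Integrable fun t => t * gaussWeight a t / (a * t ^ 2 + 1) := by
    refine (integrable_mul_gaussWeight ha).mono ((continuous_id.mul (continuous_gaussWeight a)).div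
      (by fun_prop) fun t => (by linarith [hq t])).aestronglyMeasurable (ae_of_all _ fun t => ?_)
    rw [norm_div]
    exact div_le_self (norm_nonneg _) ((hq t).trans (Real.le_norm_self _))
  have hG' : Integrable G' :=
    (integrable_gaussWeight ha).mono' ((continuous_gaussWeight a).mul
      ((continuous_const.div (by fun_prop) fun t => pow_ne_zero 2 (by linarith [hq t])).sub
        continuous_const)).aestronglyMeasurable (ae_of_all _ hG'le)
  calc x * gaussWeight a x / (a * x ^ 2 + 1) = -∫ t in Ioi x, G' t := by
        rw [integral_Ioi_eq_neg_of_hasDerivAt (fun t _ => hderiv t) hG.integrableOn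
          hG'.integrableOn, neg_neg]
    _ = ∫ t in Ioi x, -G' t := (integral_neg _).symm
    _ ≤ ∫ t in Ioi x, gaussWeight a t :=
        setIntegral_mono hG'.neg.integrableOn (integrable_gaussWeight ha).integrableOn
          fun t => (neg_le_abs _).trans (hG'le t)

lemma integrable_gaussWeight_mul (ha : 0 < a) (hf : LipschitzWith K f) :
    Integrable fun t => gaussWeight a t * f t := by
  refine (((integrable_gaussWeight ha).const_mul |f 0|).add
    ((integrable_abs_mul_gaussWeight ha).const_mul K)).mono'
    ((continuous_gaussWeight a).mul hf.continuous).aestronglyMeasurable (ae_of_all _ fun t => ?_)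
  have hft : |f t| ≤ |f 0| + K * |t| := by
    have hlip := hf.abs_sub_le_mul t 0
    rw [sub_zero] at hlip
    linarith [abs_sub_abs_le_abs_sub (f t) (f 0)]
  have hw := (gaussWeight_pos a t).le
  rw [Pi.add_apply, norm_mul, Real.norm_of_nonneg hw, Real.norm_eq_abs]
  nlinarith

lemma abs_integral_Ioi_gaussWeight_mul_sub_le (ha : 0 < a) (hf : LipschitzWith K f) (x : ℝ) :
    |∫ t in Ioi x, gaussWeight a t * (f t - f x)| ≤
      K * (gaussWeight a x / a - x * ∫ t in Ioi x, gaussWeight a t) := by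
  have hint : Integrable fun t => gaussWeight a t * (f t - f x) :=
    integrable_gaussWeight_mul ha (hf.sub_const (f x))
  have hpoint : ∀ t ∈ Ioi x, |gaussWeight a t * (f t - f x)| ≤
      K * (t * gaussWeight a t - x * gaussWeight a t) := fun t ht => by
    have hw := gaussWeight_pos a t
    have hlip := hf.abs_sub_le_mul t x
    rw [abs_of_pos (sub_pos.2 (show x < t from ht))] at hlip
    rw [abs_mul, abs_of_pos hw]
    nlinarith
  calc |∫ t in Ioi x, gaussWeight a t * (f t - f x)|
      ≤ ∫ t in Ioi x, |gaussWeight a t * (f t - f x)| := abs_integral_le_integral_abs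
    _ ≤ ∫ t in Ioi x, K * (t * gaussWeight a t - x * gaussWeight a t) :=
        setIntegral_mono_on hint.abs.integrableOn
          (((integrable_mul_gaussWeight ha).sub ((integrable_gaussWeight ha).const_mul x)).const_mul
            _).integrableOn measurableSet_Ioi hpoint
    _ = K * (gaussWeight a x / a - x * ∫ t in Ioi x, gaussWeight a t) := by
        rw [integral_const_mul, integral_sub (integrable_mul_gaussWeight ha).integrableOn
          ((integrable_gaussWeight ha).const_mul x).integrableOn, integral_const_mul,
          integral_Ioi_mul_gaussWeight ha]

lemma hasDerivAt_steinTransform (hf : Continuous f)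
    (hint : Integrable fun t => gaussWeight a t * f t) (x : ℝ) :
    HasDerivAt (steinTransform a f) (a * x * steinTransform a f x + f x) x := by
  have hexp : HasDerivAt (fun u => exp (a * u ^ 2 / 2)) (a * x * exp (a * x ^ 2 / 2)) x :=
    (((hasDerivAt_pow 2 x).const_mul a).div_const 2).exp.congr_deriv (by push_cast; ring)
  refine (hexp.fun_neg.mul
    (hasDerivAt_integral_Ioi ((continuous_gaussWeight a).mul hf) hint x)).congr_deriv ?_
  simp only [steinTransform, Pi.mul_apply]
  linear_combination (f x) * exp_mul_gaussWeight a x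

lemma steinTransform_eq_neg_steinTransform_comp_neg
    (hint : Integrable fun t => gaussWeight a t * f t) (h0 : ∫ t, gaussWeight a t * f t = 0)
    (x : ℝ) : steinTransform a f x = -steinTransform a (fun t => f (-t)) (-x) := by
  have hIic : ∫ t in Iic x, gaussWeight a t * f t = -∫ t in Ioi x, gaussWeight a t * f t := by
    rw [eq_neg_iff_add_eq_zero, intervalIntegral.integral_Iic_add_Ioi hint.integrableOn
      hint.integrableOn, h0]
  have hrefl : ∫ t in Ioi (-x), gaussWeight a t * f (-t) =
      ∫ t in Iic x, gaussWeight a t * f t := by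
    simpa only [gaussWeight_neg, neg_neg] using
      integral_comp_neg_Ioi (-x) (fun t => gaussWeight a t * f t)
  rw [steinTransform, steinTransform, hrefl, hIic, neg_sq]
  ring

lemma integral_gaussWeight_mul_comp_neg (a : ℝ) (f : ℝ → ℝ) :
    ∫ t, gaussWeight a t * f (-t) = ∫ t, gaussWeight a t * f t := by
  simpa only [gaussWeight_neg] using integral_neg_eq_self (fun t => gaussWeight a t * f t) volume

lemma abs_le_of_integral_gaussWeight_mul_eq_zero (ha : 0 < a) (hf : LipschitzWith K f)
    (h0 : ∫ t, gaussWeight a t * f t = 0) (x : ℝ) : |f x| ≤ K * (|x| + 1 / √a) := by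
  have hs : 0 < √a := sqrt_pos.2 ha
  set S := √(2 * π) / √a with hS_def
  have hS : 0 < S := by positivity
  have hint := integrable_gaussWeight_mul ha hf
  have hmean : f x * S = ∫ t, gaussWeight a t * (f x - f t) := by
    simp_rw [mul_sub]
    rw [integral_sub ((integrable_gaussWeight ha).mul_const _) hint, integral_mul_const, h0,
      sub_zero, integral_gaussWeight, mul_comm]
  have hpoint : ∀ t, |gaussWeight a t * (f x - f t)| ≤
      K * (|x| * gaussWeight a t + |t| * gaussWeight a t) := fun t => by
    have hw := gaussWeight_pos a t
    have hlip := (hf.abs_sub_le_mul x t).trans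
      (mul_le_mul_of_nonneg_left (abs_sub _ _) K.coe_nonneg)
    rw [abs_mul, abs_of_pos hw]
    nlinarith
  -- `E|N| = (2 / a) / S = √(2 / (π a)) ≤ 1 / √a` for `N ~ N(0, 1 / a)`
  have hmoment : 2 / a ≤ S / √a := by
    rw [hS_def, div_div, ← sq, sq_sqrt ha.le]
    refine div_le_div_of_nonneg_right ((le_sqrt zero_le_two (by positivity)).2 ?_) ha.le
    nlinarith [pi_gt_three]
  refine le_of_mul_le_mul_right ?_ hS
  calc |f x| * S = |∫ t, gaussWeight a t * (f x - f t)| := by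
        rw [← hmean, abs_mul, abs_of_pos hS]
    _ ≤ ∫ t, |gaussWeight a t * (f x - f t)| := abs_integral_le_integral_abs
    _ ≤ ∫ t, K * (|x| * gaussWeight a t + |t| * gaussWeight a t) :=
        integral_mono ((integrable_gaussWeight ha).mul_const (f x) |>.sub hint |>.abs |>.congr
            (ae_of_all _ fun t => by simp only [Pi.sub_apply, mul_sub]))
          ((((integrable_gaussWeight ha).const_mul _).add
            (integrable_abs_mul_gaussWeight ha)).const_mul _) hpoint
    _ = K * (|x| * S + 2 / a) := by
        rw [integral_const_mul, integral_add ((integrable_gaussWeight ha).const_mul _)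
          (integrable_abs_mul_gaussWeight ha), integral_const_mul,
          integral_gaussWeight, integral_abs_mul_gaussWeight ha]
    _ ≤ K * (|x| + 1 / √a) * S := by
        rw [mul_assoc, add_mul, one_div_mul_eq_div]
        gcongr

lemma abs_mul_steinTransform_add_le (ha : 0 < a) (hf : LipschitzWith K f) {x : ℝ} (hx : 0 ≤ x)
    (hfx : |f x| ≤ K * (x + 1 / √a)) :
    |a * x * steinTransform a f x + f x| ≤ 2 / √a * K := by
  set E := exp (a * x ^ 2 / 2)
  set Q := ∫ t in Ioi x, gaussWeight a t
  set D := ∫ t in Ioi x, gaussWeight a t * (f t - f x)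
  set P := a * x * E * Q
  have hEw : E * gaussWeight a x = 1 := exp_mul_gaussWeight a x
  have haxE : 0 ≤ a * x * E := by positivity
  have hq : 0 < a * x ^ 2 + 1 := by positivity
  have hsplit : a * x * steinTransform a f x + f x = -(a * x * E) * D + f x * (1 - P) := by
    have : ∫ t in Ioi x, gaussWeight a t * f t = D + f x * Q := by
      rw [← integral_const_mul, ← integral_add
        (integrable_gaussWeight_mul ha (hf.sub_const (f x))).integrableOn
        ((integrable_gaussWeight ha).const_mul _).integrableOn]
      congr 1 with t
      ring
    rw [steinTransform, this]
    ring
  have hP : P ≤ 1 := calc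
    P = E * (a * x * Q) := by ring
    _ ≤ E * gaussWeight a x := mul_le_mul_of_nonneg_left (mul_integral_Ioi_gaussWeight_le ha x)
        (exp_pos _).le
    _ = 1 := hEw
  have hP' : 1 - P ≤ 1 / (a * x ^ 2 + 1) := by
    have hmills := mul_le_mul_of_nonneg_left (mul_gaussWeight_div_le_integral_Ioi ha x) haxE
    have hcollapse :
        a * x * E * (x * gaussWeight a x / (a * x ^ 2 + 1)) = 1 - 1 / (a * x ^ 2 + 1) := by
      field_simp
      linear_combination (a * x ^ 2) * hEw
    linarith
  have hD : a * x * E * |D| ≤ K * x * (1 - P) := by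
    have hbound := mul_le_mul_of_nonneg_left (abs_integral_Ioi_gaussWeight_mul_sub_le ha hf x) haxE
    have hcollapse : a * x * E * (K * (gaussWeight a x / a - x * Q)) = K * x * (1 - P) := by
      field_simp
      linear_combination (K * x) * hEw
    linarith
  have hrational : 2 * x + 1 / √a ≤ 2 / √a * (a * x ^ 2 + 1) := by
    have hs : 0 < √a := sqrt_pos.2 ha
    rw [← sub_nonneg]
    have : 2 / √a * (a * x ^ 2 + 1) - (2 * x + 1 / √a) =
        ((√a * x - 1) ^ 2 + (√a * x) ^ 2) / √a := by
      field_simp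
      linear_combination (-2 * x ^ 2) * sq_sqrt ha.le
    rw [this]
    positivity
  calc |a * x * steinTransform a f x + f x|
      ≤ a * x * E * |D| + |f x| * (1 - P) := by
        rw [hsplit, neg_mul, ← sub_eq_neg_add]
        refine (abs_sub _ _).trans_eq ?_
        rw [abs_mul, abs_mul, abs_of_nonneg haxE, abs_of_nonneg (sub_nonneg.2 hP), add_comm]
    _ ≤ K * x * (1 - P) + K * (x + 1 / √a) * (1 - P) := by gcongr
    _ = K * (2 * x + 1 / √a) * (1 - P) := by ring
    _ ≤ K * (2 * x + 1 / √a) * (1 / (a * x ^ 2 + 1)) := by gcongr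
    _ ≤ 2 / √a * K := by
        rw [mul_one_div, div_le_iff₀ hq, mul_comm _ (K : ℝ), mul_assoc]
        gcongr

lemma abs_deriv_steinTransform_le (ha : 0 < a) (hf : LipschitzWith K f)
    (h0 : ∫ t, gaussWeight a t * f t = 0) (x : ℝ) :
    |deriv (steinTransform a f) x| ≤ 2 / √a * K := by
  have hpos : ∀ {g : ℝ → ℝ}, LipschitzWith K g → ∫ t, gaussWeight a t * g t = 0 →
      ∀ y, 0 ≤ y → |deriv (steinTransform a g) y| ≤ 2 / √a * K := by
    intro g hg hg0 y hy
    rw [(hasDerivAt_steinTransform hg.continuous (integrable_gaussWeight_mul ha hg) y).deriv]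
    refine abs_mul_steinTransform_add_le ha hg hy ?_
    simpa only [abs_of_nonneg hy] using abs_le_of_integral_gaussWeight_mul_eq_zero ha hg hg0 y
  rcases le_or_gt 0 x with hx | hx
  · exact hpos hf h0 x hx
  · have hrefl : steinTransform a f = fun u => -steinTransform a (fun t => f (-t)) (-u) :=
      funext (steinTransform_eq_neg_steinTransform_comp_neg (integrable_gaussWeight_mul ha hf) h0)
    rw [hrefl, deriv.fun_neg, deriv_comp_neg, abs_neg, abs_neg]
    exact hpos (hf.comp_neg) ((integral_gaussWeight_mul_comp_neg a f).trans h0)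
      (-x) (neg_nonneg.2 hx.le)

lemma gaussMean_eq {ψ : ℝ} (hψ : ψ < 1) (h : ℝ → ℝ) :
    gaussMean ψ h = (∫ t, gaussWeight (1 - ψ) t * h t) / (√(2 * π) / √(1 - ψ)) := by
  have ha : 0 < 1 - ψ := sub_pos.2 hψ
  have hv : Real.toNNReal (1 - ψ)⁻¹ ≠ 0 := by simpa using ha
  rw [gaussMean, integral_gaussianReal_eq_integral_smul hv, ← integral_div]
  congr 1 with t
  rw [gaussianPDFReal, Real.coe_toNNReal _ (inv_nonneg.2 ha.le), smul_eq_mul, gaussWeight]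
  have hexp : -(t - 0) ^ 2 / (2 * (1 - ψ)⁻¹) = -((1 - ψ) * t ^ 2 / 2) := by
    field_simp
    ring
  rw [← div_eq_mul_inv, sqrt_div' _ ha.le, hexp]
  ring

lemma integral_gaussWeight_mul_sub_gaussMean {ψ : ℝ} (hψ : ψ < 1) {h : ℝ → ℝ}
    (hint : Integrable fun t => gaussWeight (1 - ψ) t * h t) :
    ∫ t, gaussWeight (1 - ψ) t * (h t - gaussMean ψ h) = 0 := by
  have ha : 0 < 1 - ψ := sub_pos.2 hψ
  have hS : 0 < √(2 * π) / √(1 - ψ) := div_pos (sqrt_pos.2 (by positivity)) (sqrt_pos.2 ha)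
  simp_rw [mul_sub]
  rw [integral_sub hint ((integrable_gaussWeight ha).mul_const _), integral_mul_const,
    integral_gaussWeight, gaussMean_eq hψ, mul_div_cancel₀ _ hS.ne', sub_self]

end SteinBound

open SteinBound in
theorem stmt13_general (ψ : ℝ) (hψ1 : ψ < 1) (h : ℝ → ℝ) (hdiff : Differentiable ℝ h) (C : ℝ) (hC : ∀ x, |deriv h x| ≤ C) :
    ∀ x : ℝ, |deriv (steinSol ψ h) x| ≤ 4 / Real.sqrt (1 - ψ) * C := by
  intro x
  have ha : 0 < 1 - ψ := sub_pos.2 hψ1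
  have hC0 : 0 ≤ C := (abs_nonneg _).trans (hC 0)
  have hh : LipschitzWith C.toNNReal h := lipschitzWith_of_nnnorm_deriv_le hdiff fun t => by
    rw [← NNReal.coe_le_coe, coe_nnnorm, Real.norm_eq_abs, Real.coe_toNNReal _ hC0]
    exact hC t
  have h0 := integral_gaussWeight_mul_sub_gaussMean hψ1 (integrable_gaussWeight_mul ha hh)
  calc |deriv (steinSol ψ h) x| ≤ 2 / √(1 - ψ) * C := by
        simpa only [steinSol_eq_steinTransform, Real.coe_toNNReal _ hC0] using
          abs_deriv_steinTransform_le ha (hh.sub_const _) h0 x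
    _ ≤ 4 / √(1 - ψ) * C := by gcongr; norm_num

theorem stmt13 (ψ : ℝ) (hψ0 : 0 ≤ ψ) (hψ1 : ψ < 1) (h : ℝ → ℝ) (hdiff : Differentiable ℝ h) (C : ℝ) (hC : ∀ x, |deriv h x| ≤ C) :
    ∀ x : ℝ, |deriv (steinSol ψ h) x| ≤ 4 / Real.sqrt (1 - ψ) * C :=
  stmt13_general ψ hψ1 h hdiff C hC

end
end

section
/- Let α > 0, z ∈ ℝ, and let μ be a Borel probability measure on ℝ with mean z (∫ζ μ(dζ) = z) and finite second moment. Let G denote the set of functions g : ℝ → ℝ with g(0)=0 that are twice differentiable with bounded first and second derivatives. Suppose π is a Borel probability measure on ℝ with finite first moment such that ∫[ g''(x) − x g'(x) + α∫(g(x+ζ) − g(x)) μ(dζ) ] π(dx) = 0 for every g ∈ G. Then for every g ∈ G, | ∫[ g''(x) − x g'(x) + α(g(x+z) − g(x)) ] π(dx) | ≤ (α/2)·∫(ζ−z)² μ(dζ)·‖g''‖_∞, where ‖g''‖_∞ := sup_{x∈ℝ}|g''(x)|. -/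
open MeasureTheory Set

noncomputable section

/-- The class `G` of test functions: `g(0) = 0`, `g` twice differentiable with
bounded first and second derivatives. -/
def memG (g : ℝ → ℝ) : Prop :=
  g 0 = 0 ∧ Differentiable ℝ g ∧ Differentiable ℝ (deriv g) ∧
    (∃ C, ∀ x, |deriv g x| ≤ C) ∧ (∃ C, ∀ x, |deriv (deriv g) x| ≤ C)

/-!
Subtracting `π(A₁ g)` from `π(A g) = 0` leaves `α π(D)` with
`D x = ∫ g (x + ζ) μ(dζ) - g (x + z)`. Since `z` is the mean of `μ`, the linear term of the
Taylor expansion of `g` around `x + z` integrates to zero against `μ`, so `D` is a pure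
second-order remainder: `|D x| ≤ ‖g''‖_∞ / 2 · ∫ (ζ - z)² μ(dζ)` for every `x`.
-/

def jumpDiffusionGenerator (α : ℝ) (μ : Measure ℝ) (g : ℝ → ℝ) (x : ℝ) : ℝ :=
  deriv (deriv g) x - x * deriv g x + α * ∫ ζ, (g (x + ζ) - g x) ∂μ

def fixedJumpGenerator (α z : ℝ) (g : ℝ → ℝ) (x : ℝ) : ℝ :=
  deriv (deriv g) x - x * deriv g x + α * (g (x + z) - g x)

section Taylor

variable {g : ℝ → ℝ} {C : ℝ}

lemma abs_sub_le_of_abs_deriv_le (hg : Differentiable ℝ g) (hC : ∀ x, |deriv g x| ≤ C)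
    (a b : ℝ) : |g b - g a| ≤ C * |b - a| :=
  convex_univ.norm_image_sub_le_of_norm_deriv_le (fun x _ => hg x) (fun x _ => hC x)
    (mem_univ a) (mem_univ b)

open scoped Interval in
lemma abs_sub_sub_deriv_mul_le (hg : Differentiable ℝ g) (hg' : Differentiable ℝ (deriv g))
    (hC : ∀ x, |deriv (deriv g) x| ≤ C) (a b : ℝ) :
    |g b - g a - deriv g a * (b - a)| ≤ C / 2 * (b - a) ^ 2 := by
  have hcont : Continuous (deriv g) := hg'.continuous
  have hrepr : g b - g a - deriv g a * (b - a) = ∫ t in a..b, (deriv g t - deriv g a) := by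
    rw [intervalIntegral.integral_sub (hcont.intervalIntegrable a b) intervalIntegrable_const,
      intervalIntegral.integral_deriv_eq_sub (fun x _ => hg x) (hcont.intervalIntegrable a b),
      intervalIntegral.integral_const, smul_eq_mul, mul_comm]
  calc |g b - g a - deriv g a * (b - a)|
      ≤ ∫ t in Ι a b, |deriv g t - deriv g a| := by
        simpa only [hrepr, Real.norm_eq_abs] using
          intervalIntegral.norm_integral_le_integral_norm_uIoc (f := fun t => deriv g t - deriv g a)
    _ ≤ ∫ t in Ι a b, C * |t - a| := by
        refine setIntegral_mono_on ?_ ?_ measurableSet_uIoc fun t _ =>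
          abs_sub_le_of_abs_deriv_le hg' hC a t
        · exact (hcont.sub continuous_const).abs.integrableOn_uIoc
        · exact (continuous_const.mul (continuous_id.sub continuous_const).abs).integrableOn_uIoc
    _ = C / 2 * (b - a) ^ 2 := by
        have h := integral_pow_abs_sub_uIoc (a := a) (b := b) 1
        norm_num [sq_abs] at h
        rw [integral_const_mul, h]
        ring

end Taylor

section JumpComparison

variable {μ : Measure ℝ} {g : ℝ → ℝ} {C : ℝ}

lemma integrable_comp_const_add [IsFiniteMeasure μ] (hμ : MemLp (fun ζ => ζ) 2 μ)
    (hg : Differentiable ℝ g) (hg' : Differentiable ℝ (deriv g))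
    (hC : ∀ x, |deriv (deriv g) x| ≤ C) (x : ℝ) : Integrable (fun ζ => g (x + ζ)) μ := by
  refine Integrable.mono' (g := fun ζ => |g x| + |deriv g x| * |ζ| + C / 2 * ζ ^ 2) ?_
    (hg.continuous.comp (continuous_const.add continuous_id)).aestronglyMeasurable
    (ae_of_all _ fun ζ => ?_)
  · exact ((integrable_const _).add ((hμ.integrable one_le_two).abs.const_mul _)).add
      (hμ.integrable_sq.const_mul _)
  · have h := abs_sub_sub_deriv_mul_le hg hg' hC x (x + ζ)
    rw [add_sub_cancel_left] at h
    calc ‖g (x + ζ)‖ = |(g (x + ζ) - g x - deriv g x * ζ) + g x + deriv g x * ζ| := by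
          rw [Real.norm_eq_abs]; ring_nf
      _ ≤ |g (x + ζ) - g x - deriv g x * ζ| + |g x| + |deriv g x * ζ| := abs_add_three _ _ _
      _ ≤ |g x| + |deriv g x| * |ζ| + C / 2 * ζ ^ 2 := by rw [abs_mul]; linarith

lemma abs_integral_comp_add_sub_le [IsProbabilityMeasure μ] (hμ : MemLp (fun ζ => ζ) 2 μ)
    {z : ℝ} (hmean : ∫ ζ, ζ ∂μ = z) (hg : Differentiable ℝ g) (hg' : Differentiable ℝ (deriv g))
    (hC : ∀ x, |deriv (deriv g) x| ≤ C) (x : ℝ) :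
    |∫ ζ, g (x + ζ) ∂μ - g (x + z)| ≤ C / 2 * ∫ ζ, (ζ - z) ^ 2 ∂μ := by
  have hint := integrable_comp_const_add hμ hg hg' hC x
  have hid : Integrable (fun ζ => ζ) μ := hμ.integrable one_le_two
  have hdev : Integrable (fun ζ => ζ - z) μ := hid.sub (integrable_const z)
  have hdev_sq : Integrable (fun ζ => (ζ - z) ^ 2) μ := (hμ.sub (memLp_const z)).integrable_sq
  have hremainder : ∫ ζ, (g (x + ζ) - g (x + z) - deriv g (x + z) * (ζ - z)) ∂μ
      = ∫ ζ, g (x + ζ) ∂μ - g (x + z) := by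
    have hint_sub : Integrable (fun ζ => g (x + ζ) - g (x + z)) μ :=
      hint.sub (integrable_const _)
    rw [integral_sub hint_sub (hdev.const_mul _),
      integral_sub hint (integrable_const _), integral_const_mul,
      integral_sub hid (integrable_const _), hmean]
    simp
  rw [← hremainder, ← integral_const_mul, ← Real.norm_eq_abs]
  refine norm_integral_le_of_norm_le (hdev_sq.const_mul _) (ae_of_all _ fun ζ => ?_)
  simpa [add_sub_add_left_eq_sub] using abs_sub_sub_deriv_mul_le hg hg' hC (x + z) (x + ζ)

end JumpComparison

lemma jumpDiffusionGenerator_eq_fixedJumpGenerator_add {μ : Measure ℝ} [IsProbabilityMeasure μ]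
    {g : ℝ → ℝ} {x : ℝ} (hint : Integrable (fun ζ => g (x + ζ)) μ) (α z : ℝ) :
    jumpDiffusionGenerator α μ g x
      = fixedJumpGenerator α z g x + α * (∫ ζ, g (x + ζ) ∂μ - g (x + z)) := by
  simp only [jumpDiffusionGenerator, fixedJumpGenerator, integral_sub hint (integrable_const _),
    integral_const, probReal_univ, one_smul]
  ring

lemma integrable_fixedJumpGenerator {π : Measure ℝ} [IsFiniteMeasure π]
    (hπ : Integrable (fun x => |x|) π) {g : ℝ → ℝ} {C₁ C : ℝ} (hg : Differentiable ℝ g)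
    (hC₁ : ∀ x, |deriv g x| ≤ C₁) (hC : ∀ x, |deriv (deriv g) x| ≤ C) (α z : ℝ) :
    Integrable (fixedJumpGenerator α z g) π := by
  have hid : Integrable (fun x => x) π :=
    hπ.mono' aestronglyMeasurable_id (ae_of_all _ fun _ => le_rfl)
  have hshift : Integrable (fun x => g (x + z) - g x) π :=
    .of_bound ((hg.continuous.comp (continuous_add_const z)).sub hg.continuous).aestronglyMeasurable
      (C₁ * |z|) (ae_of_all _ fun x => by
        simpa using abs_sub_le_of_abs_deriv_le hg hC₁ x (x + z))
  exact ((Integrable.of_bound (stronglyMeasurable_deriv _).aestronglyMeasurable C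
    (ae_of_all _ hC)).sub (hid.mul_bdd (stronglyMeasurable_deriv g).aestronglyMeasurable
      (ae_of_all _ hC₁))).add (hshift.const_mul α)

theorem stmt17 (α z : ℝ) (hα : 0 < α)
    (μ : Measure ℝ) [IsProbabilityMeasure μ]
    (hmean : (∫ ζ, ζ ∂μ) = z) (hmom : Integrable (fun ζ => ζ ^ 2) μ)
    (π : Measure ℝ) [IsProbabilityMeasure π]
    (hπmom : Integrable (fun x => |x|) π)
    -- π is the equilibrium distribution of the jump-diffusion with
    -- jump distribution μ: π(A g) = 0 for every g ∈ G
    (heq : ∀ g : ℝ → ℝ, memG g →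
      (∫ x, (deriv (deriv g) x - x * deriv g x
          + α * ∫ ζ, (g (x + ζ) - g x) ∂μ) ∂π) = 0) :
    -- |π(A1 g)| ≤ (α/2) ∫ (ζ - z)² μ(dζ) ‖g''‖_∞ for every g ∈ G
    ∀ g : ℝ → ℝ, memG g → ∀ C : ℝ, (∀ x, |deriv (deriv g) x| ≤ C) →
      |∫ x, (deriv (deriv g) x - x * deriv g x + α * (g (x + z) - g x)) ∂π|
        ≤ α / 2 * (∫ ζ, (ζ - z) ^ 2 ∂μ) * C := by
  intro g hG C hC
  obtain ⟨-, hg, hg', ⟨C₁, hC₁⟩, -⟩ := id hG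
  have hμ : MemLp (fun ζ => ζ) 2 μ :=
    (memLp_two_iff_integrable_sq aestronglyMeasurable_id).2 hmom
  set D : ℝ → ℝ := fun x => ∫ ζ, g (x + ζ) ∂μ - g (x + z)
  have hD : ∀ x, ‖D x‖ ≤ C / 2 * ∫ ζ, (ζ - z) ^ 2 ∂μ :=
    abs_integral_comp_add_sub_le hμ hmean hg hg' hC
  have hDint : Integrable D π := by
    refine .of_bound (StronglyMeasurable.aestronglyMeasurable ?_) _ (ae_of_all _ hD)
    exact (hg.continuous.comp continuous_add).stronglyMeasurable.integral_prod_right'.sub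
      (hg.continuous.comp (continuous_add_const z)).stronglyMeasurable
  have hA1 := integrable_fixedJumpGenerator hπmom hg hC₁ hC α z
  have hA1_eq : ∫ x, fixedJumpGenerator α z g x ∂π = -(α * ∫ x, D x ∂π) := by
    have h : ∫ x, jumpDiffusionGenerator α μ g x ∂π = 0 := heq g hG
    simp_rw [jumpDiffusionGenerator_eq_fixedJumpGenerator_add
      (integrable_comp_const_add hμ hg hg' hC _) α z] at h
    rw [integral_add hA1 (hDint.const_mul α), integral_const_mul] at h
    linarith
  change |∫ x, fixedJumpGenerator α z g x ∂π| ≤ _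
  rw [hA1_eq, abs_neg, abs_mul, abs_of_pos hα]
  calc α * |∫ x, D x ∂π| ≤ α * (C / 2 * ∫ ζ, (ζ - z) ^ 2 ∂μ) := by
        gcongr
        simpa using norm_integral_le_of_norm_le_const (μ := π) (ae_of_all _ hD)
    _ = α / 2 * (∫ ζ, (ζ - z) ^ 2 ∂μ) * C := by ring

end
end

section
/- Let I₁, …, I_n be (possibly dependent) {0,1}-valued random variables on a common probability space with p_i := P(I_i = 1) ∈ (0, 1/3) for each i, and set W := Σ_{j=1}^n I_j and W^{(i)} := W − I_i. For each i and each integer l ≥ 1, set v_{il} := (−1)^{l+1}(p_i/(1−p_i))^l. Then for every bounded function g : ℤ₊ → ℝ and each i, both series below converge absolutely and Σ_{l=1}^∞ v_{il}·E[g(W+l)] − E[I_i·g(W)] = Σ_{l=1}^∞ v_{il}·( E[g(W^{(i)}+l)] − p_i⁻¹·E[I_i·g(W^{(i)}+l)] ). -/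
/-!
Write `W = W⁽ⁱ⁾ + Iᵢ`. Since `Iᵢ ∈ {0, 1}`, pointwise
`g (W + l) = g (W⁽ⁱ⁾ + l) - Iᵢ g (W⁽ⁱ⁾ + l) + Iᵢ g (W⁽ⁱ⁾ + l + 1)` and `Iᵢ g W = Iᵢ g (W⁽ⁱ⁾ + 1)`.
Taking expectations, the identity becomes a summation by parts: with `q = p / (1 - p)` one has
`q⁻¹ = p⁻¹ - 1`, `q⁻¹ v₁ = 1` and `q⁻¹ v_{l+1} = -v_l`. As `p < 1/2` gives `q < 1`, the weights
decay geometrically and all series against bounded sequences converge absolutely.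
-/

open MeasureTheory

/-- The paper's weight `v_{l+1}`, for `q = p / (1 - p)`. -/
def altGeomWeight (q : ℝ) (l : ℕ) : ℝ := (-1) ^ l * q ^ (l + 1)

lemma abs_altGeomWeight (q : ℝ) (l : ℕ) : |altGeomWeight q l| = |q| ^ (l + 1) := by
  simp [altGeomWeight, abs_mul, abs_pow]

lemma inv_mul_altGeomWeight_zero {q : ℝ} (hq : q ≠ 0) : q⁻¹ * altGeomWeight q 0 = 1 := by
  simp [altGeomWeight, hq]

lemma inv_mul_altGeomWeight_succ {q : ℝ} (hq : q ≠ 0) (l : ℕ) :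
    q⁻¹ * altGeomWeight q (l + 1) = -altGeomWeight q l := by
  simp only [altGeomWeight]
  field_simp
  ring

lemma summable_abs_altGeomWeight_mul {q K : ℝ} (hq : |q| < 1) {F : ℕ → ℝ}
    (hF : ∀ l, |F l| ≤ K) : Summable fun l => |altGeomWeight q l * F l| := by
  refine .of_nonneg_of_le (fun l => abs_nonneg _) (fun l => ?_)
    ((summable_geometric_of_lt_one (abs_nonneg q) hq).mul_right (|q| * K))
  rw [abs_mul, abs_altGeomWeight, pow_succ, mul_assoc]
  gcongr
  exact hF l

lemma summable_altGeomWeight_mul {q K : ℝ} (hq : |q| < 1) {F : ℕ → ℝ}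
    (hF : ∀ l, |F l| ≤ K) : Summable fun l => altGeomWeight q l * F l :=
  (summable_abs_altGeomWeight_mul hq hF).of_abs

lemma inv_mul_tsum_altGeomWeight_mul {q K : ℝ} (hq0 : q ≠ 0) (hq : |q| < 1) {b : ℕ → ℝ}
    (hb : ∀ l, |b l| ≤ K) :
    q⁻¹ * ∑' l, altGeomWeight q l * b l = b 0 - ∑' l, altGeomWeight q l * b (l + 1) := by
  rw [← tsum_mul_left, ((summable_altGeomWeight_mul hq hb).mul_left _).tsum_eq_zero_add,
    ← mul_assoc, inv_mul_altGeomWeight_zero hq0, one_mul, sub_eq_add_neg, ← tsum_neg]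
  congr 1
  refine tsum_congr fun l => ?_
  rw [← mul_assoc, inv_mul_altGeomWeight_succ hq0, neg_mul]

lemma abs_div_one_sub_lt_one {p : ℝ} (hp0 : 0 < p) (hp1 : p < 1 / 2) : |p / (1 - p)| < 1 := by
  rw [abs_of_pos (div_pos hp0 (by linarith)), div_lt_one (by linarith)]
  linarith

lemma tsum_altGeomWeight_mul_sub_eq {p K : ℝ} (hp0 : 0 < p) (hp1 : p < 1 / 2) {a b : ℕ → ℝ}
    (ha : ∀ l, |a l| ≤ K) (hb : ∀ l, |b l| ≤ K) :
    (∑' l, altGeomWeight (p / (1 - p)) l * (a l - b l + b (l + 1))) - b 0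
      = ∑' l, altGeomWeight (p / (1 - p)) l * (a l - p⁻¹ * b l) := by
  set q := p / (1 - p)
  have hq := abs_div_one_sub_lt_one hp0 hp1
  have hq0 : q ≠ 0 := (div_pos hp0 (by linarith)).ne'
  have hqinv : q⁻¹ = p⁻¹ - 1 := by simp only [q]; field_simp
  have sa := summable_altGeomWeight_mul hq ha
  have sb := summable_altGeomWeight_mul hq hb
  have sb' := summable_altGeomWeight_mul hq (fun l => hb (l + 1))
  have key := inv_mul_tsum_altGeomWeight_mul hq0 hq hb
  rw [hqinv] at key
  simp only [mul_sub, mul_add, mul_left_comm _ p⁻¹]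
  rw [(sa.sub sb).tsum_add sb', sa.tsum_sub sb, sa.tsum_sub (sb.mul_left _), tsum_mul_left]
  linear_combination key

lemma abs_mul_le_of_le_one {C : ℝ} {j : ℕ} (hj : j ≤ 1) {x : ℝ} (hx : |x| ≤ C) :
    |(j : ℝ) * x| ≤ C := by
  rw [abs_mul, Nat.abs_cast]
  exact (mul_le_of_le_one_left (abs_nonneg x) (by exact_mod_cast hj)).trans hx

lemma apply_add_add_of_le_one {g : ℕ → ℝ} {j : ℕ} (hj : j ≤ 1) (y m : ℕ) :
    g (y + j + m) = g (y + m) - j * g (y + m) + j * g (y + (m + 1)) := by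
  interval_cases j <;> simp [Nat.add_right_comm y 1 m, add_assoc]

section Expectation

variable {Ω : Type*} [MeasurableSpace Ω] {P : Measure Ω} {g : ℕ → ℝ} {C : ℝ} {Y J : Ω → ℕ}

lemma abs_integral_le_of_forall_abs_le [IsProbabilityMeasure P] {f : Ω → ℝ}
    (hf : ∀ ω, |f ω| ≤ C) : |∫ ω, f ω ∂P| ≤ C := by
  simpa using norm_integral_le_of_norm_le_const (μ := P)
    (ae_of_all _ fun ω => (Real.norm_eq_abs _).trans_le (hf ω))

lemma integral_mul_comp_add_of_le_one (hJ1 : ∀ ω, J ω ≤ 1) :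
    ∫ ω, (J ω : ℝ) * g (Y ω + J ω) ∂P = ∫ ω, (J ω : ℝ) * g (Y ω + 1) ∂P := by
  refine integral_congr_ae (ae_of_all _ fun ω => ?_)
  rcases Nat.le_one_iff_eq_zero_or_eq_one.mp (hJ1 ω) with h | h <;> simp [h]

variable [IsFiniteMeasure P]

lemma integrable_comp_of_abs_le (hg : ∀ k, |g k| ≤ C) (hY : Measurable Y) :
    Integrable (fun ω => g (Y ω)) P :=
  .of_bound (measurable_from_top.comp hY).aestronglyMeasurable C (ae_of_all _ fun _ => hg _)

lemma integrable_mul_comp_of_abs_le (hg : ∀ k, |g k| ≤ C) (hY : Measurable Y)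
    (hJ : Measurable J) (hJ1 : ∀ ω, J ω ≤ 1) :
    Integrable (fun ω => (J ω : ℝ) * g (Y ω)) P :=
  .of_bound ((measurable_from_top.comp hJ).mul (measurable_from_top.comp hY)).aestronglyMeasurable
    C (ae_of_all _ fun ω => abs_mul_le_of_le_one (hJ1 ω) (hg _))

lemma integral_comp_add_add_of_le_one (hg : ∀ k, |g k| ≤ C) (hY : Measurable Y)
    (hJ : Measurable J) (hJ1 : ∀ ω, J ω ≤ 1) (m : ℕ) :
    ∫ ω, g (Y ω + J ω + m) ∂P = (∫ ω, g (Y ω + m) ∂P) - (∫ ω, (J ω : ℝ) * g (Y ω + m) ∂P)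
      + ∫ ω, (J ω : ℝ) * g (Y ω + (m + 1)) ∂P := by
  have hA := integrable_comp_of_abs_le (P := P) hg (hY.add_const m)
  have hB := integrable_mul_comp_of_abs_le (P := P) hg (hY.add_const m) hJ hJ1
  have hB' := integrable_mul_comp_of_abs_le (P := P) hg (hY.add_const (m + 1)) hJ hJ1
  rw [← integral_sub hA hB,
    ← integral_add (f := fun ω => g (Y ω + m) - J ω * g (Y ω + m)) (hA.sub hB) hB']
  exact integral_congr_ae (ae_of_all _ fun ω => apply_add_add_of_le_one (hJ1 ω) _ _)

end Expectation

theorem stmt18_general {Ω : Type*} [MeasurableSpace Ω] (P : Measure Ω) [IsProbabilityMeasure P]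
    (n : ℕ) (I : Fin n → Ω → ℕ)
    (hmeas : ∀ i, Measurable (I i)) (h01 : ∀ i ω, I i ω ≤ 1)
    (p : Fin n → ℝ)
    (hp0 : ∀ i, 0 < p i) (hp3 : ∀ i, p i < 1 / 3)
    (W : Ω → ℕ) (hW : ∀ ω, W ω = ∑ j, I j ω)
    (Wi : Fin n → Ω → ℕ) (hWi : ∀ i ω, Wi i ω = W ω - I i ω)
    -- v_{il} = (-1)^{l+1} (p_i/(1-p_i))^l, for l ≥ 1
    (v : Fin n → ℕ → ℝ) (hv : ∀ i l, v i l = (-1 : ℝ) ^ (l + 1) * (p i / (1 - p i)) ^ l)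
    (g : ℕ → ℝ) (C : ℝ) (hg : ∀ k, |g k| ≤ C) (i : Fin n) :
    -- both series converge absolutely ...
    Summable (fun l : ℕ => |v i (l + 1) * ∫ ω, g (W ω + (l + 1)) ∂P|) ∧
    Summable (fun l : ℕ =>
      |v i (l + 1) * ((∫ ω, g (Wi i ω + (l + 1)) ∂P)
        - (p i)⁻¹ * ∫ ω, (I i ω : ℝ) * g (Wi i ω + (l + 1)) ∂P)|) ∧
    -- ... and Σ_{l≥1} v_{il} E[g(W+l)] - E[I_i g(W)]
    --     = Σ_{l≥1} v_{il} (E[g(W⁽ⁱ⁾+l)] - p_i⁻¹ E[I_i g(W⁽ⁱ⁾+l)])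
    (∑' l : ℕ, v i (l + 1) * ∫ ω, g (W ω + (l + 1)) ∂P)
        - (∫ ω, (I i ω : ℝ) * g (W ω) ∂P)
      = ∑' l : ℕ, v i (l + 1) * ((∫ ω, g (Wi i ω + (l + 1)) ∂P)
          - (p i)⁻¹ * ∫ ω, (I i ω : ℝ) * g (Wi i ω + (l + 1)) ∂P) := by
  have hp1 : p i < 1 / 2 := by linarith [hp3 i]
  have hq := abs_div_one_sub_lt_one (hp0 i) hp1
  have hvw : ∀ l, v i (l + 1) = altGeomWeight (p i / (1 - p i)) l := fun l => by
    rw [hv, altGeomWeight, pow_succ, pow_succ, mul_neg_one, mul_neg_one, neg_neg]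
  have hW_eq : W = fun ω => Wi i ω + I i ω := funext fun ω => by
    rw [hWi, Nat.sub_add_cancel (hW ω ▸ Finset.single_le_sum (fun j _ => Nat.zero_le (I j ω))
      (Finset.mem_univ i))]
  have hWim : Measurable (Wi i) := by
    have hWm : Measurable W := (funext hW : W = _) ▸ Finset.measurable_sum _ fun j _ => hmeas j
    exact (funext (hWi i) : Wi i = _) ▸ hWm.sub (hmeas i)
  have hA l : |∫ ω, g (Wi i ω + (l + 1)) ∂P| ≤ C := abs_integral_le_of_forall_abs_le fun _ => hg _
  have hB l : |∫ ω, (I i ω : ℝ) * g (Wi i ω + (l + 1)) ∂P| ≤ C :=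
    abs_integral_le_of_forall_abs_le fun ω => abs_mul_le_of_le_one (h01 i ω) (hg _)
  have hAB l : |(∫ ω, g (Wi i ω + (l + 1)) ∂P)
      - (p i)⁻¹ * ∫ ω, (I i ω : ℝ) * g (Wi i ω + (l + 1)) ∂P| ≤ C + (p i)⁻¹ * C := by
    refine (abs_sub _ _).trans (add_le_add (hA l) ?_)
    rw [abs_mul, abs_inv, abs_of_pos (hp0 i)]
    exact mul_le_mul_of_nonneg_left (hB l) (inv_nonneg.2 (hp0 i).le)
  simp only [hvw]
  refine ⟨summable_abs_altGeomWeight_mul hq fun l => abs_integral_le_of_forall_abs_le fun _ => hg _,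
    summable_abs_altGeomWeight_mul hq hAB, ?_⟩
  simp only [hW_eq, integral_comp_add_add_of_le_one hg hWim (hmeas i) (h01 i),
    integral_mul_comp_add_of_le_one (h01 i)]
  exact tsum_altGeomWeight_mul_sub_eq (hp0 i) hp1 hA hB

theorem stmt18 {Ω : Type*} [MeasurableSpace Ω] (P : Measure Ω) [IsProbabilityMeasure P]
    (n : ℕ) (I : Fin n → Ω → ℕ)
    (hmeas : ∀ i, Measurable (I i)) (h01 : ∀ i ω, I i ω ≤ 1)
    (p : Fin n → ℝ)
    (hp : ∀ i, (P {ω | I i ω = 1}).toReal = p i)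
    (hp0 : ∀ i, 0 < p i) (hp3 : ∀ i, p i < 1 / 3)
    (W : Ω → ℕ) (hW : ∀ ω, W ω = ∑ j, I j ω)
    (Wi : Fin n → Ω → ℕ) (hWi : ∀ i ω, Wi i ω = W ω - I i ω)
    -- v_{il} = (-1)^{l+1} (p_i/(1-p_i))^l, for l ≥ 1
    (v : Fin n → ℕ → ℝ) (hv : ∀ i l, v i l = (-1 : ℝ) ^ (l + 1) * (p i / (1 - p i)) ^ l)
    (g : ℕ → ℝ) (C : ℝ) (hg : ∀ k, |g k| ≤ C) (i : Fin n) :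
    -- both series converge absolutely ...
    Summable (fun l : ℕ => |v i (l + 1) * ∫ ω, g (W ω + (l + 1)) ∂P|) ∧
    Summable (fun l : ℕ =>
      |v i (l + 1) * ((∫ ω, g (Wi i ω + (l + 1)) ∂P)
        - (p i)⁻¹ * ∫ ω, (I i ω : ℝ) * g (Wi i ω + (l + 1)) ∂P)|) ∧
    -- ... and Σ_{l≥1} v_{il} E[g(W+l)] - E[I_i g(W)]
    --     = Σ_{l≥1} v_{il} (E[g(W⁽ⁱ⁾+l)] - p_i⁻¹ E[I_i g(W⁽ⁱ⁾+l)])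
    (∑' l : ℕ, v i (l + 1) * ∫ ω, g (W ω + (l + 1)) ∂P)
        - (∫ ω, (I i ω : ℝ) * g (W ω) ∂P)
      = ∑' l : ℕ, v i (l + 1) * ((∫ ω, g (Wi i ω + (l + 1)) ∂P)
          - (p i)⁻¹ * ∫ ω, (I i ω : ℝ) * g (Wi i ω + (l + 1)) ∂P) :=
  stmt18_general P n I hmeas h01 p hp0 hp3 W hW Wi hWi v hv g C hg i
end

section
/- Let I₁, …, I_n be (possibly dependent) {0,1}-valued random variables on a common probability space with p_i := P(I_i = 1) ∈ (0, 1/3) for each i, and set W := Σ_{j=1}^n I_j and W^{(i)} := W − I_i. For each i, let W̃^{(i)} be a random variable defined on the same probability space whose distribution equals the conditional distribution of W^{(i)} given I_i = 1, and set η₁ := Σ_{i=1}^n (p_i/(1−2p_i))·E|W̃^{(i)} − W^{(i)}|. For integers l ≥ 1 define λ_{1l} := ((−1)^{l+1}/l)·Σ_{i=1}^n (p_i/(1−p_i))^l. Then for every bounded function g : ℤ₊ → ℝ, | Σ_{l=1}^∞ l·λ_{1l}·E[g(W+l)] − E[W·g(W)] | ≤ η₁·‖Δg‖_∞, where ‖Δg‖_∞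 := sup_{j≥0} |g(j+1) − g(j)|. -/
/-!
Fix `i`, write `I = Iᵢ`, `V = W⁽ⁱ⁾`, `Ṽ = W̃⁽ⁱ⁾`, `θ = p/(1-p)`, so that `W = V + I`. Splitting on
`I ∈ {0, 1}` and trading `V` on `{I = 1}` for `Ṽ`, which has its conditional law, gives
`E g(W + m) = E g(V + m) - p E g(Ṽ + m) + p E g(Ṽ + m + 1)` and `E[I g(W)] = p E g(Ṽ + 1)`.
As `θ (1 - p) = p`, the `Ṽ`-terms of `∑ₗ (-θ)ˡ θ E g(W + l + 1) - E[I g(W)]` telescope to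
`-∑ₗ (-θ)ˡ θ E g(Ṽ + l + 1)`, so the difference is `∑ₗ (-θ)ˡ θ (E g(V + l + 1) - E g(Ṽ + l + 1))`,
whose terms are at most `θˡ⁺¹ ‖Δg‖ E|Ṽ - V|` in absolute value; the geometric series gives the
factor `θ/(1-θ) = p/(1-2p)`. Summing over `i`, with `W g(W) = ∑ᵢ Iᵢ g(W)`, proves the theorem.
-/

open MeasureTheory ProbabilityTheory

theorem abs_sub_le_mul_of_abs_succ_sub_le {g : ℕ → ℝ} {D : ℝ}
    (hD : ∀ j, |g (j + 1) - g j| ≤ D) (a b : ℕ) : |g a - g b| ≤ D * |(a : ℝ) - b| := by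
  wlog hba : b ≤ a generalizing a b
  · rw [abs_sub_comm, abs_sub_comm (a : ℝ)]
    exact this b a (by omega)
  have h := dist_le_Ico_sum_of_dist_le (f := g) (d := fun _ => D) hba fun _ _ => by
    rw [dist_comm, Real.dist_eq]
    exact hD _
  rw [Finset.sum_const, Nat.card_Ico, nsmul_eq_mul, Real.dist_eq, abs_sub_comm] at h
  calc |g a - g b| ≤ (a - b : ℕ) * D := h
    _ = D * |(a : ℝ) - b| := by
      rw [Nat.cast_sub hba, abs_of_nonneg (sub_nonneg.2 (by exact_mod_cast hba)), mul_comm]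

section Geometric

variable {θ : ℝ}

theorem div_one_sub_mem_Ico {p : ℝ} (hp0 : 0 ≤ p) (hp2 : p < 1 / 2) : p / (1 - p) ∈ Set.Ico 0 1 :=
  ⟨div_nonneg hp0 (by linarith), (div_lt_one (by linarith)).2 (by linarith)⟩

theorem summable_neg_pow_mul_of_abs_le (hθ0 : 0 ≤ θ) (hθ1 : θ < 1) {x : ℕ → ℝ} {C : ℝ}
    (hx : ∀ l, |x l| ≤ C) : Summable fun l => (-θ) ^ l * x l :=
  .of_norm_bounded ((summable_geometric_of_lt_one hθ0 hθ1).mul_right C) fun l => by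
    rw [norm_mul, norm_pow, norm_neg, Real.norm_of_nonneg hθ0, Real.norm_eq_abs]
    exact mul_le_mul_of_nonneg_left (hx l) (pow_nonneg hθ0 l)

theorem summable_neg_pow_mul_mul_of_abs_le (hθ0 : 0 ≤ θ) (hθ1 : θ < 1) {x : ℕ → ℝ} {C : ℝ}
    (hx : ∀ l, |x l| ≤ C) : Summable fun l => (-θ) ^ l * θ * x l :=
  ((summable_neg_pow_mul_of_abs_le hθ0 hθ1 hx).mul_left θ).congr fun l => by ring

theorem abs_tsum_neg_pow_mul_le (hθ0 : 0 ≤ θ) (hθ1 : θ < 1) {y : ℕ → ℝ} {K : ℝ}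
    (hy : ∀ l, |y l| ≤ K) : |∑' l, (-θ) ^ l * θ * y l| ≤ θ / (1 - θ) * K := by
  have hgeom := (hasSum_geometric_of_lt_one hθ0 hθ1).mul_right (θ * K)
  rw [← Real.norm_eq_abs, show θ / (1 - θ) * K = (1 - θ)⁻¹ * (θ * K) by ring]
  refine tsum_of_norm_bounded hgeom fun l => ?_
  rw [norm_mul, norm_mul, norm_pow, norm_neg, Real.norm_of_nonneg hθ0, Real.norm_eq_abs, mul_assoc]
  exact mul_le_mul_of_nonneg_left (mul_le_mul_of_nonneg_left (hy l) hθ0) (pow_nonneg hθ0 l)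

theorem tsum_neg_pow_mul_sub_eq (hθ0 : 0 ≤ θ) (hθ1 : θ < 1) {p C : ℝ} (hθp : θ * (1 - p) = p)
    {c t : ℕ → ℝ} (hc : ∀ m, |c m| ≤ C) (ht : ∀ m, |t m| ≤ C) :
    ∑' l, (-θ) ^ l * θ * (c (l + 1) - p * t (l + 1) + p * t (l + 2)) - p * t 1 =
      ∑' l, (-θ) ^ l * θ * (c (l + 1) - t (l + 1)) := by
  set s : ℕ → ℝ := fun l => (-θ) ^ l * t (l + 1)
  have hs : Summable s := summable_neg_pow_mul_of_abs_le hθ0 hθ1 fun l => ht (l + 1)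
  have hct : Summable fun l => (-θ) ^ l * θ * (c (l + 1) - t (l + 1)) :=
    summable_neg_pow_mul_mul_of_abs_le hθ0 hθ1 fun l =>
      (abs_sub _ _).trans (add_le_add (hc _) (ht _))
  have hterm : ∀ l, (-θ) ^ l * θ * (c (l + 1) - p * t (l + 1) + p * t (l + 2)) =
      (-θ) ^ l * θ * (c (l + 1) - t (l + 1)) + p * (s l - s (l + 1)) := fun l => by
    simp only [s, pow_succ]
    linear_combination (-θ) ^ l * t (l + 1) * hθp
  have hs1 : Summable fun l => s (l + 1) := (summable_nat_add_iff 1).2 hs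
  have hshift : ∑' l, s l - ∑' l, s (l + 1) = t 1 := by
    rw [hs.tsum_eq_zero_add]
    simp [s]
  rw [tsum_congr hterm, hct.tsum_add ((hs.sub hs1).mul_left p), tsum_mul_left, hs.tsum_sub hs1,
    hshift, add_sub_cancel_right]

end Geometric

theorem tsum_sum_neg_pow_mul {ι : Type*} [Fintype ι] {θ : ι → ℝ} (hθ : ∀ i, θ i ∈ Set.Ico 0 1)
    {x : ℕ → ℝ} {C : ℝ} (hx : ∀ l, |x l| ≤ C) :
    ∑' l, (∑ i, (-θ i) ^ l * θ i) * x l = ∑ i, ∑' l, (-θ i) ^ l * θ i * x l := by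
  simp_rw [Finset.sum_mul]
  exact Summable.tsum_finsetSum fun i _ => summable_neg_pow_mul_mul_of_abs_le (hθ i).1 (hθ i).2 hx

section Probability

variable {Ω : Type*} [MeasurableSpace Ω] {P : Measure Ω}

theorem identDistrib_cond_of_measure_eq {X Y : Ω → ℕ} {A : Set Ω} (hX : Measurable X)
    (hY : Measurable Y) (hA : MeasurableSet A)
    (h : ∀ k, P {ω | Y ω = k} = P ({ω | X ω = k} ∩ A) / P A) : IdentDistrib Y X P P[|A] where
  aemeasurable_fst := hY.aemeasurable
  aemeasurable_snd := hX.aemeasurable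
  map_eq := Measure.ext_of_singleton fun k => by
    rw [Measure.map_apply hY (measurableSet_singleton k),
      Measure.map_apply hX (measurableSet_singleton k), cond_apply hA, Set.inter_comm]
    exact (h k).trans ENNReal.div_eq_inv_mul

theorem abs_integral_comp_le [IsProbabilityMeasure P] (X : Ω → ℕ) {f : ℕ → ℝ} {C : ℝ}
    (hf : ∀ k, |f k| ≤ C) : |∫ ω, f (X ω) ∂P| ≤ C := by
  simpa using norm_integral_le_of_norm_le_const (μ := P)
    (.of_forall fun ω => (Real.norm_eq_abs _).trans_le (hf (X ω)))

theorem integrable_comp_of_abs_le_s19 [IsFiniteMeasure P] {X : Ω → ℕ} (hX : AEMeasurable X P)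
    {f : ℕ → ℝ} {C : ℝ} (hf : ∀ k, |f k| ≤ C) : Integrable (fun ω => f (X ω)) P :=
  .of_bound (measurable_from_nat.comp_aemeasurable hX).aestronglyMeasurable C
    (.of_forall fun ω => hf (X ω))

theorem MeasureTheory.Integrable.cond {E : Type*} [NormedAddCommGroup E] {f : Ω → E}
    (hf : Integrable f P) (s : Set Ω) : Integrable f P[|s] := by
  rcases eq_or_ne (P s) 0 with h0 | h0
  · rw [cond_eq_zero_of_meas_eq_zero h0]
    exact integrable_zero_measure
  · exact hf.restrict.smul_measure (ENNReal.inv_ne_top.2 h0)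

variable [IsFiniteMeasure P] {I V : Ω → ℕ}

theorem integrable_natCast_mul_comp (hI : Measurable I) (hV : AEMeasurable V P)
    (hI01 : ∀ ω, I ω ≤ 1) {f : ℕ → ℝ} {C : ℝ} (hf : ∀ k, |f k| ≤ C) :
    Integrable (fun ω => (I ω : ℝ) * f (V ω)) P :=
  (integrable_comp_of_abs_le_s19 hV hf).bdd_mul (measurable_from_nat.comp hI).aestronglyMeasurable
    (c := 1) (.of_forall fun ω => by simpa using hI01 ω)

theorem integral_natCast_mul_eq_of_identDistrib {Vt : Ω → ℕ} (hI : Measurable I)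
    (hI01 : ∀ ω, I ω ≤ 1) (hlaw : IdentDistrib Vt V P P[|{ω | I ω = 1}]) (h : ℕ → ℝ) :
    ∫ ω, (I ω : ℝ) * h (V ω) ∂P = (P {ω | I ω = 1}).toReal * ∫ ω, h (Vt ω) ∂P := by
  set A := {ω | I ω = 1}
  have hA : MeasurableSet A := hI (measurableSet_singleton 1)
  have hind : (fun ω => (I ω : ℝ) * h (V ω)) = A.indicator fun ω => h (V ω) := funext fun ω => by
    rcases Nat.le_one_iff_eq_zero_or_eq_one.1 (hI01 ω) with h0 | h1
    · simp [A, h0]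
    · simp [A, h1]
  have hcomp := (hlaw.comp (measurable_from_nat (f := h))).integral_eq
  simp only [Function.comp_def] at hcomp
  rw [hind, integral_indicator hA, hcomp]
  simp only [ProbabilityTheory.cond, integral_smul_measure, smul_eq_mul, ENNReal.toReal_inv]
  rcases eq_or_ne (P A) 0 with h0 | h0
  · simp [Measure.restrict_eq_zero.2 h0]
  · rw [← mul_assoc, mul_inv_cancel₀ (ENNReal.toReal_ne_zero.2 ⟨h0, measure_ne_top P A⟩), one_mul]

theorem integral_natCast_mul_comp_eq_sum {ι : Type*} [Fintype ι] {I : ι → Ω → ℕ} {W : Ω → ℕ}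
    (hI : ∀ i, Measurable (I i)) (hI01 : ∀ i ω, I i ω ≤ 1) (hW : ∀ ω, W ω = ∑ j, I j ω)
    (hWm : Measurable W) {f : ℕ → ℝ} {C : ℝ} (hf : ∀ k, |f k| ≤ C) :
    ∫ ω, (W ω : ℝ) * f (W ω) ∂P = ∑ i, ∫ ω, (I i ω : ℝ) * f (W ω) ∂P := by
  rw [← integral_finsetSum _ fun i _ =>
    integrable_natCast_mul_comp (hI i) hWm.aemeasurable (hI01 i) hf]
  congr 1 with ω
  rw [hW, Nat.cast_sum, Finset.sum_mul]

theorem integral_comp_add_of_le_one (hI : Measurable I) (hV : Measurable V) (hI01 : ∀ ω, I ω ≤ 1)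
    {f : ℕ → ℝ} {C : ℝ} (hf : ∀ k, |f k| ≤ C) :
    ∫ ω, f (V ω + I ω) ∂P = ∫ ω, f (V ω) ∂P - ∫ ω, (I ω : ℝ) * f (V ω) ∂P
      + ∫ ω, (I ω : ℝ) * f (V ω + 1) ∂P := by
  have hfV := integrable_comp_of_abs_le_s19 (P := P) hV.aemeasurable hf
  have hIfV := integrable_natCast_mul_comp (P := P) hI hV.aemeasurable hI01 hf
  have hIfV₁ := integrable_natCast_mul_comp (P := P) hI hV.aemeasurable hI01
    (f := fun k => f (k + 1)) fun k => hf _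
  have hsplit : (fun ω => f (V ω + I ω)) =
      fun ω => f (V ω) - (I ω : ℝ) * f (V ω) + (I ω : ℝ) * f (V ω + 1) := funext fun ω => by
    rcases Nat.le_one_iff_eq_zero_or_eq_one.1 (hI01 ω) with h0 | h1
    · simp [h0]
    · simp [h1]
  have hdiff : Integrable (fun ω => f (V ω) - (I ω : ℝ) * f (V ω)) P := hfV.sub hIfV
  rw [hsplit, integral_add hdiff hIfV₁, integral_sub hfV hIfV]

theorem abs_tsum_sub_integral_natCast_mul_le [IsProbabilityMeasure P] {Vt : Ω → ℕ} {p C D : ℝ}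
    (hI : Measurable I) (hV : Measurable V) (hI01 : ∀ ω, I ω ≤ 1)
    (hVint : Integrable (fun ω => (V ω : ℝ)) P) (hlaw : IdentDistrib Vt V P P[|{ω | I ω = 1}])
    (hp : (P {ω | I ω = 1}).toReal = p) (hp2 : p < 1 / 2) {g : ℕ → ℝ}
    (hg : ∀ k, |g k| ≤ C) (hD : ∀ j, |g (j + 1) - g j| ≤ D) :
    |∑' l : ℕ, (-(p / (1 - p))) ^ l * (p / (1 - p)) * ∫ ω, g (V ω + I ω + (l + 1)) ∂P
        - ∫ ω, (I ω : ℝ) * g (V ω + I ω) ∂P|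
      ≤ p / (1 - 2 * p) * (∫ ω, |(Vt ω : ℝ) - V ω| ∂P) * D := by
  set θ := p / (1 - p)
  have hp0 : 0 ≤ p := hp ▸ ENNReal.toReal_nonneg
  have hp1 : 1 - p ≠ 0 := by linarith
  have hp12 : 1 - 2 * p ≠ 0 := by linarith
  obtain ⟨hθ0, hθ1⟩ : θ ∈ Set.Ico 0 1 := div_one_sub_mem_Ico hp0 hp2
  have hθp : θ * (1 - p) = p := div_mul_cancel₀ p hp1
  set c : ℕ → ℝ := fun m => ∫ ω, g (V ω + m) ∂P
  set t : ℕ → ℝ := fun m => ∫ ω, g (Vt ω + m) ∂P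
  set M := ∫ ω, |(Vt ω : ℝ) - V ω| ∂P
  have hI_mul (h : ℕ → ℝ) : ∫ ω, (I ω : ℝ) * h (V ω) ∂P = p * ∫ ω, h (Vt ω) ∂P :=
    hp ▸ integral_natCast_mul_eq_of_identDistrib hI hI01 hlaw h
  have hshift (m : ℕ) : ∫ ω, g (V ω + I ω + m) ∂P = c m - p * t m + p * t (m + 1) := by
    rw [integral_comp_add_of_le_one (f := fun k => g (k + m)) hI hV hI01 fun k => hg _,
      hI_mul fun k => g (k + m), hI_mul fun k => g (k + 1 + m)]
    simp only [c, t, add_right_comm _ 1 m, add_assoc]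
  have hlast : ∫ ω, (I ω : ℝ) * g (V ω + I ω) ∂P = p * t 1 := by
    rw [← hI_mul fun k => g (k + 1)]
    congr 1 with ω
    rcases Nat.le_one_iff_eq_zero_or_eq_one.1 (hI01 ω) with h0 | h1
    · simp [h0]
    · simp [h1]
  have hVtint : Integrable (fun ω => (Vt ω : ℝ)) P :=
    (hlaw.comp (measurable_from_nat (f := Nat.cast))).integrable_iff.2 (hVint.cond _)
  have hct (m : ℕ) : |c m - t m| ≤ D * M := by
    have hgV := integrable_comp_of_abs_le_s19 (P := P) hV.aemeasurable (f := fun k => g (k + m))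
      fun k => hg _
    have hgVt := integrable_comp_of_abs_le_s19 (P := P) hlaw.aemeasurable_fst
      (f := fun k => g (k + m)) fun k => hg _
    calc |c m - t m| = |∫ ω, (g (V ω + m) - g (Vt ω + m)) ∂P| := by
          rw [integral_sub hgV hgVt]
      _ ≤ ∫ ω, |g (V ω + m) - g (Vt ω + m)| ∂P := abs_integral_le_integral_abs
      _ ≤ ∫ ω, D * |(Vt ω : ℝ) - V ω| ∂P := by
          refine integral_mono (hgV.sub hgVt).abs ((hVtint.sub hVint).abs.const_mul D) fun ω => ?_
          refine (abs_sub_le_mul_of_abs_succ_sub_le hD _ _).trans_eq ?_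
          rw [abs_sub_comm]
          push_cast
          ring_nf
      _ = D * M := integral_const_mul D _
  calc _ = |∑' l : ℕ, (-θ) ^ l * θ * (c (l + 1) - p * t (l + 1) + p * t (l + 2)) - p * t 1| := by
        simp only [hshift, hlast]
    _ = |∑' l : ℕ, (-θ) ^ l * θ * (c (l + 1) - t (l + 1))| := by
        rw [tsum_neg_pow_mul_sub_eq hθ0 hθ1 hθp
          (fun m => abs_integral_comp_le _ fun k => hg (k + m))
          fun m => abs_integral_comp_le _ fun k => hg (k + m)]
    _ ≤ θ / (1 - θ) * (D * M) := abs_tsum_neg_pow_mul_le hθ0 hθ1 fun l => hct (l + 1)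
    _ = p / (1 - 2 * p) * M * D := by
        simp only [θ]
        field_simp
        ring

end Probability

theorem stmt19_general {Ω : Type*} [MeasurableSpace Ω] (P : Measure Ω) [IsProbabilityMeasure P]
    (n : ℕ) (I : Fin n → Ω → ℕ)
    (hmeas : ∀ i, Measurable (I i)) (h01 : ∀ i ω, I i ω ≤ 1)
    (p : Fin n → ℝ)
    (hp : ∀ i, (P {ω | I i ω = 1}).toReal = p i)
    (hp3 : ∀ i, p i < 1 / 3)
    (W : Ω → ℕ) (hW : ∀ ω, W ω = ∑ j, I j ω)
    (Wi : Fin n → Ω → ℕ) (hWi : ∀ i ω, Wi i ω = W ω - I i ω)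
    -- W̃⁽ⁱ⁾ has the conditional distribution of W⁽ⁱ⁾ given I_i = 1
    (Wt : Fin n → Ω → ℕ) (hWtmeas : ∀ i, Measurable (Wt i))
    (hWt : ∀ i (k : ℕ),
      P {ω | Wt i ω = k} = P ({ω | Wi i ω = k} ∩ {ω | I i ω = 1}) / P {ω | I i ω = 1})
    -- η₁ = Σᵢ (pᵢ/(1-2pᵢ)) E|W̃⁽ⁱ⁾ - W⁽ⁱ⁾|
    (η₁ : ℝ)
    (hη₁ : η₁ = ∑ i, p i / (1 - 2 * p i) * ∫ ω, |(Wt i ω : ℝ) - (Wi i ω : ℝ)| ∂P)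
    -- l·λ_{1l} = Σᵢ (-1)^{l+1} (pᵢ/(1-pᵢ))^l, for l ≥ 1
    (lLam : ℕ → ℝ)
    (hlLam : ∀ l : ℕ, lLam l = ∑ i, (-1 : ℝ) ^ (l + 1) * (p i / (1 - p i)) ^ l)
    (g : ℕ → ℝ) (C : ℝ) (hg : ∀ k, |g k| ≤ C)
    (D : ℝ) (hD : ∀ j : ℕ, |g (j + 1) - g j| ≤ D) :
    -- | Σ_{l≥1} l λ_{1l} E[g(W+l)] - E[W g(W)] | ≤ η₁ ‖Δg‖_∞
    |(∑' l : ℕ, lLam (l + 1) * ∫ ω, g (W ω + (l + 1)) ∂P)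
        - ∫ ω, (W ω : ℝ) * g (W ω) ∂P|
      ≤ η₁ * D := by
  have hWmeas : Measurable W := by
    rw [funext hW]
    exact Finset.measurable_sum _ fun j _ => hmeas j
  have hWle (ω) : W ω ≤ n := hW ω ▸ (Finset.sum_le_sum fun j _ => h01 j ω).trans (by simp)
  have hIW (i ω) : W ω = Wi i ω + I i ω := by
    have : I i ω ≤ W ω :=
      hW ω ▸ Finset.single_le_sum (fun j _ => Nat.zero_le (I j ω)) (Finset.mem_univ i)
    rw [hWi]
    omega
  have hWimeas (i) : Measurable (Wi i) := by
    rw [funext (hWi i)]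
    exact hWmeas.sub (hmeas i)
  have hWiint (i) : Integrable (fun ω => (Wi i ω : ℝ)) P :=
    .of_bound (measurable_from_nat.comp (hWimeas i)).aestronglyMeasurable n (.of_forall fun ω => by
      rw [Real.norm_natCast, Nat.cast_le, hWi]
      exact (Nat.sub_le _ _).trans (hWle ω))
  have hterm (i) := abs_tsum_sub_integral_natCast_mul_le (hmeas i) (hWimeas i) (h01 i) (hWiint i)
    (identDistrib_cond_of_measure_eq (hWimeas i) (hWtmeas i) (hmeas i (measurableSet_singleton 1))
      (hWt i)) (hp i) (by linarith [hp3 i]) hg hD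
  simp only [← hIW] at hterm
  have hlLam' (l : ℕ) : lLam (l + 1) = ∑ i, (-(p i / (1 - p i))) ^ l * (p i / (1 - p i)) := by
    rw [hlLam]
    congr 1 with i
    ring
  simp only [hlLam']
  rw [tsum_sum_neg_pow_mul
      (fun i => div_one_sub_mem_Ico (hp i ▸ ENNReal.toReal_nonneg) (by linarith [hp3 i]))
      fun l => abs_integral_comp_le W fun k => hg (k + (l + 1)),
    integral_natCast_mul_comp_eq_sum hmeas h01 hW hWmeas hg, ← Finset.sum_sub_distrib, hη₁,
    Finset.sum_mul]
  exact (Finset.abs_sum_le_sum_abs _ _).trans (Finset.sum_le_sum fun i _ => hterm i)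

theorem stmt19 {Ω : Type*} [MeasurableSpace Ω] (P : Measure Ω) [IsProbabilityMeasure P]
    (n : ℕ) (I : Fin n → Ω → ℕ)
    (hmeas : ∀ i, Measurable (I i)) (h01 : ∀ i ω, I i ω ≤ 1)
    (p : Fin n → ℝ)
    (hp : ∀ i, (P {ω | I i ω = 1}).toReal = p i)
    (hp0 : ∀ i, 0 < p i) (hp3 : ∀ i, p i < 1 / 3)
    (W : Ω → ℕ) (hW : ∀ ω, W ω = ∑ j, I j ω)
    (Wi : Fin n → Ω → ℕ) (hWi : ∀ i ω, Wi i ω = W ω - I i ω)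
    -- W̃⁽ⁱ⁾ has the conditional distribution of W⁽ⁱ⁾ given I_i = 1
    (Wt : Fin n → Ω → ℕ) (hWtmeas : ∀ i, Measurable (Wt i))
    (hWt : ∀ i (k : ℕ),
      P {ω | Wt i ω = k} = P ({ω | Wi i ω = k} ∩ {ω | I i ω = 1}) / P {ω | I i ω = 1})
    -- η₁ = Σᵢ (pᵢ/(1-2pᵢ)) E|W̃⁽ⁱ⁾ - W⁽ⁱ⁾|
    (η₁ : ℝ)
    (hη₁ : η₁ = ∑ i, p i / (1 - 2 * p i) * ∫ ω, |(Wt i ω : ℝ) - (Wi i ω : ℝ)| ∂P)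
    -- l·λ_{1l} = Σᵢ (-1)^{l+1} (pᵢ/(1-pᵢ))^l, for l ≥ 1
    (lLam : ℕ → ℝ)
    (hlLam : ∀ l : ℕ, lLam l = ∑ i, (-1 : ℝ) ^ (l + 1) * (p i / (1 - p i)) ^ l)
    (g : ℕ → ℝ) (C : ℝ) (hg : ∀ k, |g k| ≤ C)
    (D : ℝ) (hD : ∀ j : ℕ, |g (j + 1) - g j| ≤ D) :
    -- | Σ_{l≥1} l λ_{1l} E[g(W+l)] - E[W g(W)] | ≤ η₁ ‖Δg‖_∞
    |(∑' l : ℕ, lLam (l + 1) * ∫ ω, g (W ω + (l + 1)) ∂P)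
        - ∫ ω, (W ω : ℝ) * g (W ω) ∂P|
      ≤ η₁ * D :=
  stmt19_general P n I hmeas h01 p hp hp3 W hW Wi hWi Wt hWtmeas hWt η₁ hη₁ lLam hlLam g C hg D hD
end
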